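/- arXiv:math/0005181 — 7 statements merged into one kernel-verified Lean document; each statement's English description precedes it below -/
import Mathlib

section
/- Let X, Y, S, T be geodesic metric spaces, f: X → Y a quasi-isometry, and σ: S → X, τ: T → Y uniformly proper maps such that the Hausdorff distance between f(σ(S)) and τ(T) is finite. Then any map g: S → T with d_Y(f(σ(x)), τ(g(x))) uniformly bounded is a quasi-isometry. -/
/-- A geodesic metric space: any two points are joined by an isometric path. -/
def IsGeodesicSpace (X : Type*) [MetricSpace X] : Prop :=
  ∀ x y : X, ∃ γ : ℝ → X, γ 0 = x ∧ γ (dist x y) = y ∧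
    ∀ s ∈ Set.Icc (0 : ℝ) (dist x y), ∀ t ∈ Set.Icc (0 : ℝ) (dist x y),
      dist (γ s) (γ t) = |s - t|

/-- `σ : S → X` is uniformly proper with uniformity data `ρ, K, C`. -/
def IsUniformlyProper {S X : Type*} [MetricSpace S] [MetricSpace X]
    (ρ : ℝ → ℝ) (K C : ℝ) (σ : S → X) : Prop :=
  Filter.Tendsto ρ Filter.atTop Filter.atTop ∧
  ∀ x y : S, ρ (dist x y) ≤ dist (σ x) (σ y) ∧ dist (σ x) (σ y) ≤ K * dist x y + C

/-!
The composite `f ∘ σ` is a coarse embedding (uniformly bornologous and effectively proper), and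
so is `τ ∘ g`, being uniformly close to it; since `τ` is itself a coarse embedding, so is `g`.
Finite Hausdorff distance makes `g` coarsely surjective, because every `τ y` is near some
`f (σ x)`, hence near `τ (g x)`, and `τ` is effectively proper. Finally, a coarse equivalence
between geodesic spaces is a quasi-isometry: chopping a geodesic into unit steps turns a bound
on the image of unit balls into a linear bound, and applying this both to `g` and to a coarse
inverse of `g` gives the two quasi-isometric inequalities.
-/

open Metric

theorem dist_le_dist_add_of_forall_dist_le {ι Y : Type*} [PseudoMetricSpace Y] {f g : ι → Y}
    {B : ℝ} (hB : ∀ x, dist (f x) (g x) ≤ B) (x x' : ι) :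
    dist (g x) (g x') ≤ dist (f x) (f x') + 2 * B := by
  have := dist_triangle4 (g x) (f x) (f x') (g x')
  linarith [dist_comm (g x) (f x), hB x, hB x']

section Coarse

variable {X Y Z : Type*} [PseudoMetricSpace X] [PseudoMetricSpace Y] [PseudoMetricSpace Z]

def IsQuasiIsometryWith (K C : ℝ) (f : X → Y) : Prop :=
  (∀ x x' : X, dist x x' / K - C ≤ dist (f x) (f x') ∧ dist (f x) (f x') ≤ K * dist x x' + C) ∧
    ∀ y : Y, ∃ x : X, dist y (f x) ≤ C

def IsUniformlyBornologous (f : X → Y) : Prop :=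
  ∀ r : ℝ, ∃ R : ℝ, ∀ x x' : X, dist x x' ≤ r → dist (f x) (f x') ≤ R

def IsEffectivelyProper (f : X → Y) : Prop :=
  ∀ r : ℝ, ∃ R : ℝ, ∀ x x' : X, dist (f x) (f x') ≤ r → dist x x' ≤ R

def IsCoarselySurjective (f : X → Y) : Prop :=
  ∃ R : ℝ, ∀ y : Y, ∃ x : X, dist y (f x) ≤ R

theorem isUniformlyBornologous_of_dist_le_mul_add {f : X → Y} {K C : ℝ}
    (h : ∀ x x', dist (f x) (f x') ≤ K * dist x x' + C) : IsUniformlyBornologous f := by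
  refine fun r => ⟨|K| * r + C, fun x x' hr => (h x x').trans ?_⟩
  have : K * dist x x' ≤ |K| * r :=
    (mul_le_mul_of_nonneg_right (le_abs_self K) dist_nonneg).trans
      (mul_le_mul_of_nonneg_left hr (abs_nonneg K))
  linarith

namespace IsUniformlyBornologous

theorem comp {g : Y → Z} {f : X → Y} (hg : IsUniformlyBornologous g)
    (hf : IsUniformlyBornologous f) : IsUniformlyBornologous (g ∘ f) := fun r =>
  let ⟨R, hR⟩ := hf r
  let ⟨R', hR'⟩ := hg R
  ⟨R', fun x x' h => hR' _ _ (hR x x' h)⟩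

theorem of_dist_le {f g : X → Y} {B : ℝ} (hf : IsUniformlyBornologous f)
    (hB : ∀ x, dist (f x) (g x) ≤ B) : IsUniformlyBornologous g := fun r =>
  let ⟨R, hR⟩ := hf r
  ⟨R + 2 * B, fun x x' h => by
    linarith [hR x x' h, dist_le_dist_add_of_forall_dist_le hB x x']⟩

theorem of_comp {g : Y → Z} {f : X → Y} (hg : IsEffectivelyProper g)
    (h : IsUniformlyBornologous (g ∘ f)) : IsUniformlyBornologous f := fun r =>
  let ⟨R, hR⟩ := h r
  let ⟨R', hR'⟩ := hg R
  ⟨R', fun x x' hr => hR' _ _ (hR x x' hr)⟩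

end IsUniformlyBornologous

namespace IsEffectivelyProper

theorem comp {g : Y → Z} {f : X → Y} (hg : IsEffectivelyProper g)
    (hf : IsEffectivelyProper f) : IsEffectivelyProper (g ∘ f) := fun r =>
  let ⟨R, hR⟩ := hg r
  let ⟨R', hR'⟩ := hf R
  ⟨R', fun x x' h => hR' x x' (hR _ _ h)⟩

theorem of_dist_le {f g : X → Y} {B : ℝ} (hf : IsEffectivelyProper f)
    (hB : ∀ x, dist (f x) (g x) ≤ B) : IsEffectivelyProper g := fun r =>
  let ⟨R, hR⟩ := hf (r + 2 * B)
  ⟨R, fun x x' h => hR x x' <| by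
    linarith [dist_le_dist_add_of_forall_dist_le (fun x => (dist_comm (g x) (f x)).trans_le (hB x))
      x x']⟩

theorem of_comp {g : Y → Z} {f : X → Y} (hg : IsUniformlyBornologous g)
    (h : IsEffectivelyProper (g ∘ f)) : IsEffectivelyProper f := fun r =>
  let ⟨R, hR⟩ := hg r
  let ⟨R', hR'⟩ := h R
  ⟨R', fun x x' hr => hR' x x' (hR _ _ hr)⟩

end IsEffectivelyProper

namespace IsQuasiIsometryWith

theorem isUniformlyBornologous {K C : ℝ} {f : X → Y} (hf : IsQuasiIsometryWith K C f) :
    IsUniformlyBornologous f :=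
  isUniformlyBornologous_of_dist_le_mul_add fun x x' => (hf.1 x x').2

theorem isEffectivelyProper {K C : ℝ} {f : X → Y} (hf : IsQuasiIsometryWith K C f)
    (hK : 0 < K) : IsEffectivelyProper f := fun r =>
  ⟨(r + C) * K, fun x x' h => by
    rw [← div_le_iff₀ hK]
    linarith [(hf.1 x x').1]⟩

theorem of_le {f : X → Y} {A : ℝ} (hA : 0 ≤ A)
    (hup : ∀ x x', dist (f x) (f x') ≤ A * dist x x' + A)
    (hlow : ∀ x x', dist x x' ≤ A * dist (f x) (f x') + A)
    (hs : ∀ y, ∃ x, dist y (f x) ≤ A) : IsQuasiIsometryWith (A + 1) A f := by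
  refine ⟨fun x x' => ⟨?_, ?_⟩, hs⟩
  · rw [sub_le_iff_le_add, div_le_iff₀ (by linarith)]
    nlinarith [hlow x x', dist_nonneg (x := f x) (y := f x')]
  · nlinarith [hup x x', dist_nonneg (x := x) (y := x')]

end IsQuasiIsometryWith

end Coarse

theorem IsEffectivelyProper.isCoarselySurjective_of_hausdorffEDist_ne_top {ι Y Z : Type*}
    [PseudoMetricSpace Y] [PseudoMetricSpace Z] {τ : Y → Z} {φ : ι → Z} {g : ι → Y}
    {B : ℝ} (hτ : IsEffectivelyProper τ) (hB : ∀ x, dist (φ x) (τ (g x)) ≤ B)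
    (hH : hausdorffEDist (Set.range φ) (Set.range τ) ≠ ⊤) : IsCoarselySurjective g := by
  obtain ⟨R, hR⟩ := hτ (hausdorffDist (Set.range φ) (Set.range τ) + 1 + B)
  refine ⟨R, fun y => ?_⟩
  obtain ⟨_, ⟨x, rfl⟩, hx⟩ :=
    exists_dist_lt_of_hausdorffDist_lt' (Set.mem_range_self y) (lt_add_one _) hH
  refine ⟨x, hR _ _ ?_⟩
  linarith [dist_triangle (τ y) (φ x) (τ (g x)), dist_comm (τ y) (φ x), hB x]

theorem dist_le_mul_of_forall_dist_succ_le {X : Type*} [PseudoMetricSpace X] (p : ℕ → X)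
    {n : ℕ} {M : ℝ} (h : ∀ i < n, dist (p i) (p (i + 1)) ≤ M) : dist (p 0) (p n) ≤ n * M := by
  calc dist (p 0) (p n) ≤ ∑ i ∈ Finset.range n, dist (p i) (p (i + 1)) :=
        dist_le_range_sum_dist p n
    _ ≤ ∑ _i ∈ Finset.range n, M := Finset.sum_le_sum fun i hi => h i (Finset.mem_range.1 hi)
    _ = n * M := by simp

theorem IsUniformlyProper.isUniformlyBornologous {S X : Type*} [MetricSpace S] [MetricSpace X]
    {ρ : ℝ → ℝ} {K C : ℝ} {σ : S → X} (h : IsUniformlyProper ρ K C σ) :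
    IsUniformlyBornologous σ :=
  isUniformlyBornologous_of_dist_le_mul_add fun x x' => (h.2 x x').2

theorem IsUniformlyProper.isEffectivelyProper {S X : Type*} [MetricSpace S] [MetricSpace X]
    {ρ : ℝ → ℝ} {K C : ℝ} {σ : S → X} (h : IsUniformlyProper ρ K C σ) :
    IsEffectivelyProper σ := fun r => by
  obtain ⟨N, hN⟩ := Filter.eventually_atTop.1 (h.1.eventually_gt_atTop r)
  refine ⟨N, fun x x' hr => le_of_not_gt fun hN' => ?_⟩
  linarith [hN _ hN'.le, (h.2 x x').1]

namespace IsGeodesicSpace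

variable {S : Type*} [MetricSpace S]

theorem exists_chain (hS : IsGeodesicSpace S) (x y : S) :
    ∃ n : ℕ, (n : ℝ) ≤ dist x y + 1 ∧
      ∃ p : ℕ → S, p 0 = x ∧ p n = y ∧ ∀ i < n, dist (p i) (p (i + 1)) ≤ 1 := by
  obtain ⟨γ, hγ0, hγd, hγ⟩ := hS x y
  have hd : 0 ≤ dist x y := dist_nonneg
  have hmem : ∀ t : ℝ, 0 ≤ t → min t (dist x y) ∈ Set.Icc 0 (dist x y) :=
    fun t ht => ⟨le_min ht hd, min_le_right _ _⟩
  refine ⟨⌈dist x y⌉₊, (Nat.ceil_lt_add_one hd).le, fun i => γ (min (i : ℝ) (dist x y)),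
    by simpa [hd] using hγ0, by simpa [Nat.le_ceil] using hγd, fun i _ => ?_⟩
  rw [hγ _ (hmem _ i.cast_nonneg) _ (hmem _ (i + 1).cast_nonneg)]
  refine (abs_min_sub_min_le_max _ _ _ _).trans ?_
  simp

theorem dist_le_mul_add_of_dist_le_one {Y : Type*} [PseudoMetricSpace Y] (hS : IsGeodesicSpace S)
    {f : S → Y} {M : ℝ} (hM : ∀ x x', dist x x' ≤ 1 → dist (f x) (f x') ≤ M) (x x' : S) :
    dist (f x) (f x') ≤ M * dist x x' + M := by
  have hM₀ : 0 ≤ M := dist_nonneg.trans (hM x x (by simp))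
  obtain ⟨n, hn, p, rfl, rfl, hp⟩ := hS.exists_chain x x'
  calc dist (f (p 0)) (f (p n)) ≤ n * M :=
        dist_le_mul_of_forall_dist_succ_le (f ∘ p) fun i hi => hM _ _ (hp i hi)
    _ ≤ (dist (p 0) (p n) + 1) * M := mul_le_mul_of_nonneg_right hn hM₀
    _ = M * dist (p 0) (p n) + M := by ring

theorem exists_isQuasiIsometryWith {T : Type*} [MetricSpace T] (hS : IsGeodesicSpace S)
    (hT : IsGeodesicSpace T) {g : S → T} (hb : IsUniformlyBornologous g)
    (hp : IsEffectivelyProper g) (hs : IsCoarselySurjective g) :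
    ∃ K C : ℝ, 1 ≤ K ∧ 0 ≤ C ∧ IsQuasiIsometryWith K C g := by
  obtain ⟨R₁, hR₁⟩ := hb 1
  obtain ⟨R₂, hR₂⟩ := hs
  -- `h` is a coarse inverse of `g`; the lower bound for `g` is the upper bound for `h`.
  choose h hh using hR₂
  obtain ⟨R₃, hR₃⟩ := hp (R₂ + 1 + R₂)
  have h_local : ∀ y y', dist y y' ≤ 1 → dist (h y) (h y') ≤ R₃ := fun y y' hy => hR₃ _ _ <| by
    linarith [dist_triangle4 (g (h y)) y y' (g (h y')), dist_comm (g (h y)) y, hh y, hh y']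
  have h_left_inv : ∀ x, dist x (h (g x)) ≤ R₃ := fun x => hR₃ _ _ <| by
    linarith [hh (g x), dist_nonneg.trans (hh (g x))]
  have upper := hS.dist_le_mul_add_of_dist_le_one hR₁
  have lower : ∀ x x', dist x x' ≤ R₃ * dist (g x) (g x') + 3 * R₃ := fun x x' => by
    linarith [dist_triangle4 x (h (g x)) (h (g x')) x', h_left_inv x, h_left_inv x',
      dist_comm x' (h (g x')), hT.dist_le_mul_add_of_dist_le_one h_local (g x) (g x')]
  set A := |R₁| + |R₂| + 3 * |R₃|
  have hA : 0 ≤ A := by positivity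
  have hR₁A : R₁ ≤ A := by linarith [le_abs_self R₁, abs_nonneg R₂, abs_nonneg R₃]
  have hR₂A : R₂ ≤ A := by linarith [le_abs_self R₂, abs_nonneg R₁, abs_nonneg R₃]
  have hR₃A : R₃ ≤ A := by linarith [le_abs_self R₃, abs_nonneg R₁, abs_nonneg R₂]
  have hR₃A' : 3 * R₃ ≤ A := by linarith [le_abs_self R₃, abs_nonneg R₁, abs_nonneg R₂]
  refine ⟨A + 1, A, by linarith, hA, IsQuasiIsometryWith.of_le hA (fun x x' => ?_)
    (fun x x' => ?_) fun y => ⟨h y, (hh y).trans hR₂A⟩⟩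
  · calc dist (g x) (g x') ≤ R₁ * dist x x' + R₁ := upper x x'
      _ ≤ A * dist x x' + A := by gcongr
  · calc dist x x' ≤ R₃ * dist (g x) (g x') + 3 * R₃ := lower x x'
      _ ≤ A * dist (g x) (g x') + A := by gcongr

end IsGeodesicSpace

theorem induced_quasi_isometry_on_subspaces_general
    (X Y S T : Type*) [MetricSpace X] [MetricSpace Y] [MetricSpace S] [MetricSpace T]
    (hS : IsGeodesicSpace S) (hT : IsGeodesicSpace T)
    (f : X → Y) (K C : ℝ) (hK : 1 ≤ K)
    (hf : (∀ x x' : X, dist x x' / K - C ≤ dist (f x) (f x') ∧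
        dist (f x) (f x') ≤ K * dist x x' + C) ∧ ∀ y : Y, ∃ x : X, dist y (f x) ≤ C)
    (ρσ ρτ : ℝ → ℝ) (Kσ Cσ Kτ Cτ : ℝ)
    (σ : S → X) (hσ : IsUniformlyProper ρσ Kσ Cσ σ)
    (τ : T → Y) (hτ : IsUniformlyProper ρτ Kτ Cτ τ)
    (hHaus : EMetric.hausdorffEdist (Set.range (f ∘ σ)) (Set.range τ) ≠ ⊤)
    (g : S → T) (B : ℝ) (hg : ∀ x : S, dist (f (σ x)) (τ (g x)) ≤ B) :
    ∃ K' C' : ℝ, 1 ≤ K' ∧ 0 ≤ C' ∧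
      (∀ x x' : S, dist x x' / K' - C' ≤ dist (g x) (g x') ∧
        dist (g x) (g x') ≤ K' * dist x x' + C') ∧
      ∀ y : T, ∃ x : S, dist y (g x) ≤ C' := by
  have hf : IsQuasiIsometryWith K C f := hf
  have hfσ_bornologous : IsUniformlyBornologous (f ∘ σ) :=
    hf.isUniformlyBornologous.comp hσ.isUniformlyBornologous
  have hfσ_proper : IsEffectivelyProper (f ∘ σ) :=
    (hf.isEffectivelyProper (by linarith)).comp hσ.isEffectivelyProper
  have hg_bornologous : IsUniformlyBornologous g :=
    IsUniformlyBornologous.of_comp hτ.isEffectivelyProper (hfσ_bornologous.of_dist_le hg)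
  have hg_proper : IsEffectivelyProper g :=
    IsEffectivelyProper.of_comp hτ.isUniformlyBornologous (hfσ_proper.of_dist_le hg)
  exact hS.exists_isQuasiIsometryWith hT hg_bornologous hg_proper
    (hτ.isEffectivelyProper.isCoarselySurjective_of_hausdorffEDist_ne_top hg hHaus)

/-- Let `X, Y, S, T` be geodesic metric spaces, `f : X → Y` a
quasi-isometry, and `σ : S → X`, `τ : T → Y` uniformly proper maps such that
`f(σ(S))` and `τ(T)` have finite Hausdorff distance.  Then any map `g : S → T` with
`dist (f (σ x)) (τ (g x))` uniformly bounded is a quasi-isometry. -/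
theorem induced_quasi_isometry_on_subspaces
    (X Y S T : Type*) [MetricSpace X] [MetricSpace Y] [MetricSpace S] [MetricSpace T]
    (hX : IsGeodesicSpace X) (hY : IsGeodesicSpace Y)
    (hS : IsGeodesicSpace S) (hT : IsGeodesicSpace T)
    (f : X → Y) (K C : ℝ) (hK : 1 ≤ K) (hC : 0 ≤ C)
    (hf : (∀ x x' : X, dist x x' / K - C ≤ dist (f x) (f x') ∧
        dist (f x) (f x') ≤ K * dist x x' + C) ∧ ∀ y : Y, ∃ x : X, dist y (f x) ≤ C)
    (ρσ ρτ : ℝ → ℝ) (Kσ Cσ Kτ Cτ : ℝ)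
    (σ : S → X) (hσ : IsUniformlyProper ρσ Kσ Cσ σ)
    (τ : T → Y) (hτ : IsUniformlyProper ρτ Kτ Cτ τ)
    (hHaus : EMetric.hausdorffEdist (Set.range (f ∘ σ)) (Set.range τ) ≠ ⊤)
    (g : S → T) (B : ℝ) (hg : ∀ x : S, dist (f (σ x)) (τ (g x)) ≤ B) :
    ∃ K' C' : ℝ, 1 ≤ K' ∧ 0 ≤ C' ∧
      (∀ x x' : S, dist x x' / K' - C' ≤ dist (g x) (g x') ∧
        dist (g x) (g x') ≤ K' * dist x x' + C') ∧
      ∀ y : T, ∃ x : S, dist y (g x) ≤ C' :=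
  induced_quasi_isometry_on_subspaces_general X Y S T hS hT f K C hK hf ρσ ρτ Kσ Cσ Kτ Cτ σ hσ τ hτ
    hHaus g B hg
end

section
/- A matrix M ∈ GL(n,ℝ) lies on a one-parameter subgroup of GL(n,ℝ) if and only if M has a square root in GL(n,ℝ). In particular, for every M ∈ GL(n,ℝ), the matrix M² lies on a one-parameter subgroup of GL(n,ℝ). -/
/-!
A matrix `ρ 1` on a one-parameter subgroup is the square of `ρ (1 / 2)`. Conversely, `A * A` lies
on the one-parameter subgroup `t ↦ exp (t • L)` as soon as `exp L = A * A`, so it suffices to find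
a real logarithm of `A * A`.

Over `ℂ`, an invertible matrix `B` has a logarithm that is a polynomial in `B`: the factorisation
of its minimal polynomial into coprime factors `(X - μ) ^ k` gives spectral idempotents `E μ`,
polynomial in `B`, on whose ranges `B = μ (1 + N)` with `N` nilpotent; there
`log μ + log (1 + N)` is a logarithm, `log (1 + N)` being a truncated power series. If `B` is real,
the entrywise conjugate `C̄` of such a logarithm `C` is again a logarithm of `B` commuting with `C`,
so `C + C̄` is a real logarithm of `B * B`.
-/

/-- A one-parameter subgroup of `GL(n,ℝ)`, viewed as a continuous family of matrices:
a continuous homomorphism `ρ : ℝ → GL(n,ℝ)`. -/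
def IsOneParamSubgroup {n : ℕ} (ρ : ℝ → Matrix (Fin n) (Fin n) ℝ) : Prop :=
  Continuous ρ ∧ ρ 0 = 1 ∧ (∀ s t : ℝ, ρ (s + t) = ρ s * ρ t) ∧ ∀ t, IsUnit (ρ t)

open Polynomial NormedSpace
open scoped Nat

namespace Polynomial

variable (K : Type*) [Field K]

/-- `expTrunc K k` and `logOneAddTrunc K k` are the Taylor polynomials of `exp X` and
`log (1 + X)` of degrees `k - 1` and `k`. -/
noncomputable def expTrunc (k : ℕ) : K[X] :=
  ∑ m ∈ Finset.range k, C (m ! : K)⁻¹ * X ^ m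

noncomputable def logOneAddTrunc (k : ℕ) : K[X] :=
  ∑ i ∈ Finset.range k, C ((-1) ^ i / (i + 1 : K)) * X ^ (i + 1)

variable {K}

lemma expTrunc_succ (k : ℕ) : expTrunc K (k + 1) = expTrunc K k + C (k ! : K)⁻¹ * X ^ k :=
  Finset.sum_range_succ _ _

lemma eval_zero_expTrunc_succ (k : ℕ) : (expTrunc K (k + 1)).eval 0 = 1 := by
  simp [expTrunc, eval_finsetSum, Finset.sum_range_succ']

lemma derivative_expTrunc_succ [CharZero K] (k : ℕ) :
    derivative (expTrunc K (k + 1)) = expTrunc K k := by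
  rw [expTrunc, derivative_sum, Finset.sum_range_succ', expTrunc]
  simp only [derivative_C_mul_X_pow, pow_zero, mul_one, derivative_C, add_zero,
    Nat.add_sub_cancel]
  refine Finset.sum_congr rfl fun m _ => ?_
  rw [Nat.factorial_succ]
  push_cast
  field_simp

lemma X_dvd_logOneAddTrunc (k : ℕ) : X ∣ logOneAddTrunc K k :=
  Finset.dvd_sum fun i _ => (dvd_pow_self X i.succ_ne_zero).mul_left _

lemma one_add_X_mul_derivative_logOneAddTrunc [CharZero K] (k : ℕ) :
    (1 + X) * derivative (logOneAddTrunc K k) = 1 - (-X) ^ k := by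
  have h : derivative (logOneAddTrunc K k) = ∑ i ∈ Finset.range k, (-X) ^ i := by
    rw [logOneAddTrunc, derivative_sum]
    refine Finset.sum_congr rfl fun i _ => ?_
    rw [derivative_C_mul_X_pow, Nat.add_sub_cancel]
    push_cast
    rw [div_mul_cancel₀ _ (Nat.cast_add_one_ne_zero i), neg_pow (X : K[X])]
    simp
  rw [h, ← mul_neg_geom_sum, sub_neg_eq_add]

/-- Comparing coefficients, `(1 + X) D' = D` reads `(d + 1) D_{d+1} = (1 - d) D_d`. -/
lemma X_pow_succ_dvd_of_X_pow_dvd_one_add_X_mul_derivative_sub [CharZero K] {D : K[X]} {k : ℕ}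
    (h0 : D.coeff 0 = 0) (h : X ^ k ∣ (1 + X) * derivative D - D) : X ^ (k + 1) ∣ D := by
  rw [X_pow_dvd_iff] at h ⊢
  intro d hd
  induction d with
  | zero => exact h0
  | succ d ih =>
    have hd' := h d (by omega)
    have hX : (X * derivative D).coeff d = 0 := by
      cases d with
      | zero => simp
      | succ d => simp [coeff_derivative, ih (by omega)]
    simp only [add_mul, one_mul, coeff_sub, coeff_add, hX, coeff_derivative, ih (by omega)] at hd'
    simpa [Nat.cast_add_one_ne_zero] using hd'

/-- `F = expTrunc ∘ logOneAddTrunc` solves `(1 + X) F' = F` modulo `X ^ k`, because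
`(1 + X) ℓ' = 1` and `expTrunc' = expTrunc` hold modulo `X ^ k`. -/
theorem X_pow_succ_dvd_expTrunc_comp_logOneAddTrunc_sub [CharZero K] (k : ℕ) :
    X ^ (k + 1) ∣ (expTrunc K (k + 1)).comp (logOneAddTrunc K k) - (1 + X) := by
  set ℓ := logOneAddTrunc K k
  set F := (expTrunc K (k + 1)).comp ℓ
  obtain ⟨q, hq⟩ : X ∣ ℓ := X_dvd_logOneAddTrunc k
  refine X_pow_succ_dvd_of_X_pow_dvd_one_add_X_mul_derivative_sub ?_ ?_
  · simp [coeff_zero_eq_eval_zero, F, eval_comp, hq, eval_zero_expTrunc_succ]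
  · have hF : derivative F = derivative ℓ * (F - C (k ! : K)⁻¹ * ℓ ^ k) := by
      rw [derivative_comp, derivative_expTrunc_succ]
      simp only [F, expTrunc_succ, add_comp, mul_comp, C_comp, X_pow_comp, add_sub_cancel_right]
    have hℓ : ℓ ^ k = X ^ k * q ^ k := by rw [hq, mul_pow]
    refine ⟨-(-1) ^ k * F - (1 - (-X) ^ k) * C (k ! : K)⁻¹ * q ^ k, ?_⟩
    simp only [derivative_sub, derivative_add, derivative_one, derivative_X, hF]
    linear_combination (F - C (k ! : K)⁻¹ * ℓ ^ k) *
        one_add_X_mul_derivative_logOneAddTrunc (K := K) k - (1 - (-X) ^ k) * C (k ! : K)⁻¹ * hℓ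

end Polynomial

theorem Commute.aeval_right {R A : Type*} [CommSemiring R] [Semiring A] [Algebra R A] {a b : A}
    (h : Commute a b) (p : R[X]) : Commute a (aeval b p) :=
  Algebra.commute_of_mem_adjoin_singleton_of_commute (aeval_mem_adjoin_singleton R b) h

namespace NormedSpace

section TopologicalRing

variable {K 𝔸 : Type*} [Field K] [CharZero K] [Ring 𝔸] [Algebra K 𝔸] [TopologicalSpace 𝔸]
  [IsTopologicalRing 𝔸]

variable (K) in
lemma exp_eq_aeval_expTrunc {x : 𝔸} {k : ℕ} (hx : x ^ k = 0) :
    exp x = aeval x (expTrunc K k) := by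
  rw [exp_eq_tsum K]
  dsimp only
  rw [tsum_eq_sum (s := Finset.range k), expTrunc, map_sum]
  · refine Finset.sum_congr rfl fun m _ => ?_
    rw [map_mul, aeval_C, map_pow, aeval_X, Algebra.smul_def]
  · intro m hm
    rw [pow_eq_zero_of_le (by simpa using hm) hx, smul_zero]

lemma exp_aeval_logOneAddTrunc {N : 𝔸} {k : ℕ} (hN : N ^ (k + 1) = 0) :
    exp (aeval N (logOneAddTrunc K k)) = 1 + N := by
  obtain ⟨q, hq⟩ := X_dvd_logOneAddTrunc (K := K) k
  have hL : aeval N (logOneAddTrunc K k) ^ (k + 1) = 0 := by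
    rw [hq, map_mul, aeval_X, ((Commute.refl N).aeval_right q).mul_pow, hN, zero_mul]
  obtain ⟨r, hr⟩ := X_pow_succ_dvd_expTrunc_comp_logOneAddTrunc_sub (K := K) k
  rw [exp_eq_aeval_expTrunc K hL, ← aeval_comp, sub_eq_iff_eq_add'.mp hr]
  simp [hN]

end TopologicalRing

section Banach

variable {𝔸 : Type*} [NormedRing 𝔸] [NormedAlgebra ℂ 𝔸]

lemma exp_smul_of_isIdempotentElem {E : 𝔸} (hE : IsIdempotentElem E) (c : ℂ) :
    exp (c • E) = 1 + (Complex.exp c - 1) • E := by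
  have hpow : ∀ m, (c • E) ^ m = if m = 0 then 1 else c ^ m • E := by
    rintro (_ | m)
    · simp
    · rw [_root_.smul_pow, hE.pow_succ_eq, if_neg m.succ_ne_zero]
  have hc : HasSum (fun m : ℕ => (m ! : ℂ)⁻¹ • c ^ m) (Complex.exp c) := by
    rw [Complex.exp_eq_exp_ℂ, exp_eq_tsum ℂ]
    exact (expSeries_summable' c).hasSum
  have hsum : HasSum (fun m : ℕ => (m ! : ℂ)⁻¹ • (c • E) ^ m)
      ((Complex.exp c) • E + (1 - E)) := by
    convert (hc.smul_const E).add (hasSum_ite_eq 0 (1 - E)) using 1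
    funext m
    rcases eq_or_ne m 0 with rfl | hm
    · simp
    · simp [hpow, hm, smul_smul]
  rw [exp_eq_tsum ℂ]
  dsimp only
  rw [hsum.tsum_eq, sub_smul, one_smul]
  abel

variable [CompleteSpace 𝔸]

/-- On the range of `E`, `b = μ (1 + N)` with `N = μ⁻¹ (b - μ) E` nilpotent. -/
lemma exp_eq_one_sub_add_mul_of_isIdempotentElem {b E : 𝔸} (hE : IsIdempotentElem E)
    (hbE : Commute b E) {μ : ℂ} (hμ : μ ≠ 0) {k : ℕ}
    (hk : (b - algebraMap ℂ 𝔸 μ) ^ (k + 1) * E = 0) :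
    exp (Complex.log μ • E + aeval (μ⁻¹ • (b - algebraMap ℂ 𝔸 μ) * E) (logOneAddTrunc ℂ k)) =
      1 - E + b * E := by
  let : NormedAlgebra ℚ 𝔸 := NormedAlgebra.restrictScalars ℚ ℂ 𝔸
  set N := μ⁻¹ • (b - algebraMap ℂ 𝔸 μ) * E
  have hcomm : Commute (b - algebraMap ℂ 𝔸 μ) E := hbE.sub_left (Algebra.commutes μ E)
  have hEN : E * N = N := by
    rw [← mul_assoc, ← (hcomm.smul_left μ⁻¹).eq, mul_assoc, hE.eq]
  have hN : N ^ (k + 1) = 0 := by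
    rw [(hcomm.smul_left μ⁻¹).mul_pow, _root_.smul_pow, hE.pow_succ_eq, smul_mul_assoc, hk,
      smul_zero]
  have hENc : Commute E (aeval N (logOneAddTrunc ℂ k)) := by
    refine Commute.aeval_right ?_ _
    rw [Commute, SemiconjBy, hEN, mul_assoc, hE.eq]
  rw [exp_add_of_commute (hENc.smul_left _), exp_smul_of_isIdempotentElem hE,
    Complex.exp_log hμ, exp_aeval_logOneAddTrunc hN, add_mul, one_mul, mul_add, mul_one,
    smul_mul_assoc, hEN]
  have hN' : N = μ⁻¹ • (b * E) - E := by
    simp only [N]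
    rw [smul_mul_assoc, sub_mul, smul_sub, Algebra.algebraMap_eq_smul_one, smul_mul_assoc,
      one_mul, smul_smul, inv_mul_cancel₀ hμ, one_smul]
  rw [hN']
  linear_combination (norm := module) (inv_mul_cancel₀ hμ) • (b * E)

end Banach

lemma exp_sum_eq_of_completeOrthogonalIdempotents {𝔸 ι : Type*} [NormedRing 𝔸]
    [NormedAlgebra ℚ 𝔸] [CompleteSpace 𝔸] [Fintype ι] {E L : ι → 𝔸} {b : 𝔸}
    (hE : CompleteOrthogonalIdempotents E) (hbE : ∀ i, Commute b (E i))
    (hL : ∀ i j, Commute (L i) (L j)) (hexp : ∀ i, exp (L i) = 1 - E i + b * E i) :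
    exp (∑ i, L i) = b := by
  classical
  suffices h : ∀ s : Finset ι, exp (∑ i ∈ s, L i) = 1 - ∑ i ∈ s, E i + b * ∑ i ∈ s, E i by
    rw [h, hE.complete, sub_self, zero_add, mul_one]
  intro s
  induction s using Finset.induction_on with
  | empty => simp
  | insert j s hj ih =>
    have h1 : E j * ∑ i ∈ s, E i = 0 := hE.mul_sum_of_notMem hj
    have h2 : E j * (b * ∑ i ∈ s, E i) = 0 := by
      rw [← mul_assoc, ← (hbE j).eq, mul_assoc, h1, mul_zero]
    rw [Finset.sum_insert hj, Finset.sum_insert hj,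
      exp_add_of_commute (Commute.sum_right _ _ _ fun i _ => hL j i), hexp, ih]
    simp only [mul_add, add_mul, mul_sub, sub_mul, one_mul, mul_one, mul_assoc, h1, h2,
      mul_zero, sub_zero, add_zero]
    abel

end NormedSpace

theorem exists_completeOrthogonalIdempotents_aeval {R A ι : Type*} [CommRing R] [Ring A]
    [Algebra R A] [Fintype ι] [DecidableEq ι] {g : ι → R[X]}
    (hg : Pairwise fun i j => IsCoprime (g i) (g j)) {b : A} (hb : aeval b (∏ i, g i) = 0) :
    ∃ e : ι → R[X], CompleteOrthogonalIdempotents (fun i => aeval b (e i)) ∧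
      ∀ i, aeval b (g i * e i) = 0 := by
  have hdvd : ∀ r, (∀ i, g i ∣ r) → aeval b r = 0 := fun r hr => by
    obtain ⟨c, rfl⟩ := Finset.prod_dvd_of_coprime (t := Finset.univ)
      (fun i _ j _ hij => hg hij) fun i _ => hr i
    rw [map_mul, hb, zero_mul]
  have hcrt : ∀ i, ∃ e, g i ∣ e - 1 ∧ ∀ j ≠ i, g j ∣ e := fun i => by
    obtain ⟨u, v, huv⟩ : IsCoprime (g i) (∏ j ∈ Finset.univ.erase i, g j) :=
      IsCoprime.prod_right fun j hj => hg (Finset.ne_of_mem_erase hj).symm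
    exact ⟨v * ∏ j ∈ Finset.univ.erase i, g j, ⟨-u, by linear_combination huv⟩,
      fun j hj => (Finset.dvd_prod_of_mem g (by simpa using hj)).mul_left v⟩
  choose e he1 he0 using hcrt
  refine ⟨e, CompleteOrthogonalIdempotents.iff_ortho_complete.2 ⟨fun i j hij => ?_, ?_⟩,
    fun i => hdvd _ fun k => ?_⟩
  · dsimp only
    rw [← map_mul]
    refine hdvd _ fun k => ?_
    rcases eq_or_ne k i with rfl | hki
    · exact (he0 j k hij).mul_left _
    · exact (he0 i k hki).mul_right _
  · rw [← map_sum, ← sub_eq_zero, ← map_one (aeval (R := R) b), ← map_sub]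
    refine hdvd _ fun k => ?_
    rw [← Finset.add_sum_erase _ _ (Finset.mem_univ k), add_sub_right_comm]
    exact dvd_add (he1 k) (Finset.dvd_sum fun i hi => he0 i k (Finset.ne_of_mem_erase hi).symm)
  · rcases eq_or_ne k i with rfl | hki
    · exact dvd_mul_right _ _
    · exact (he0 i k hki).mul_left _

theorem ne_zero_of_isRoot_minpoly {K A : Type*} [Field K] [Ring A] [Algebra K A] {b : A}
    (hint : IsIntegral K b) (hb : IsUnit b) {μ : K} (hμ : (minpoly K b).IsRoot μ) : μ ≠ 0 := by
  rintro rfl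
  obtain ⟨q, hq⟩ : X ∣ minpoly K b := by rwa [X_dvd_iff, coeff_zero_eq_eval_zero]
  have hq0 : q ≠ 0 := by
    rintro rfl
    exact minpoly.ne_zero hint (by rw [hq, mul_zero])
  have hbq : aeval b q = 0 := by
    have h := minpoly.aeval K b
    rwa [hq, map_mul, aeval_X, hb.mul_right_eq_zero] at h
  have h := natDegree_le_of_dvd (minpoly.dvd K b hbq) hq0
  rw [hq, natDegree_mul X_ne_zero hq0, natDegree_X] at h
  omega

theorem exists_spectral_idempotents {K A : Type*} [Field K] [IsAlgClosed K] [DecidableEq K]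
    [Ring A] [Algebra K A] {b : A} (hint : IsIntegral K b) :
    ∃ e : (minpoly K b).roots.toFinset → K[X],
      CompleteOrthogonalIdempotents (fun μ => aeval b (e μ)) ∧
      ∀ μ : (minpoly K b).roots.toFinset,
        (b - algebraMap K A μ) ^ (minpoly K b).roots.count ↑μ * aeval b (e μ) = 0 := by
  set s := (minpoly K b).roots
  have hm : minpoly K b = ∏ μ : s.toFinset, (X - C (μ : K)) ^ s.count (μ : K) := by
    conv_lhs => rw [(IsAlgClosed.splits (minpoly K b)).eq_prod_roots_of_monic
      (minpoly.monic hint)]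
    rw [Finset.prod_multiset_map_count]
    exact (Finset.prod_coe_sort s.toFinset fun μ => (X - C μ) ^ s.count μ).symm
  have hcop : Pairwise fun μ ν : s.toFinset =>
      IsCoprime ((X - C (μ : K)) ^ s.count (μ : K)) ((X - C (ν : K)) ^ s.count (ν : K)) :=
    fun μ ν hne => (isCoprime_X_sub_C_of_isUnit_sub
      (sub_ne_zero.2 (Subtype.coe_ne_coe.2 hne)).isUnit).pow
  obtain ⟨e, he, hge⟩ := exists_completeOrthogonalIdempotents_aeval hcop (hm ▸ minpoly.aeval K b)
  exact ⟨e, he, fun μ => by simpa using hge μ⟩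

theorem exists_exp_aeval_eq {𝔸 : Type*} [NormedRing 𝔸] [NormedAlgebra ℂ 𝔸] [CompleteSpace 𝔸]
    {b : 𝔸} (hint : IsIntegral ℂ b) (hb : IsUnit b) : ∃ p : ℂ[X], exp (aeval b p) = b := by
  classical
  let : NormedAlgebra ℚ 𝔸 := NormedAlgebra.restrictScalars ℚ ℂ 𝔸
  set s := (minpoly ℂ b).roots
  obtain ⟨e, he, hge⟩ := exists_spectral_idempotents hint
  let P (μ : s.toFinset) : ℂ[X] := C (Complex.log μ) * e μ +
    (logOneAddTrunc ℂ (s.count ↑μ)).comp (C (μ : ℂ)⁻¹ * (X - C (μ : ℂ)) * e μ)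
  refine ⟨∑ μ, P μ, ?_⟩
  rw [map_sum]
  refine exp_sum_eq_of_completeOrthogonalIdempotents he
    (fun μ => (Commute.refl b).aeval_right _) (fun μ ν => (Commute.all _ _).map (aeval b))
    fun μ => ?_
  have hP : aeval b (P μ) = Complex.log μ • aeval b (e μ) + aeval
      ((μ : ℂ)⁻¹ • (b - algebraMap ℂ 𝔸 μ) * aeval b (e μ)) (logOneAddTrunc ℂ (s.count ↑μ)) := by
    simp [P, aeval_comp, Algebra.smul_def]
  rw [hP]
  refine exp_eq_one_sub_add_mul_of_isIdempotentElem (he.idem μ)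
    ((Commute.refl b).aeval_right _) ?_ (by rw [pow_succ', mul_assoc, hge μ, mul_zero])
  exact ne_zero_of_isRoot_minpoly hint hb (isRoot_of_mem_roots (Multiset.mem_toFinset.1 μ.2))

section Matrix

/- `exp` on matrices does not depend on a norm, but the Banach-algebra lemmas are stated for the
instances below: their conclusions are restated (`replace hp`, `have h`) so that `rw` sees the
default matrix instances. -/
attribute [local instance] Matrix.linftyOpNormedAddCommGroup Matrix.linftyOpNormedRing
  Matrix.linftyOpNormedAlgebra

theorem Matrix.exists_exp_eq_mul_self {m : Type*} [Fintype m] [DecidableEq m]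
    {A : Matrix m m ℝ} (hA : IsUnit A) : ∃ L : Matrix m m ℝ, exp L = A * A := by
  let Ψ : Matrix m m ℝ →+* Matrix m m ℂ := Complex.ofRealHom.mapMatrix
  let Φ : Matrix m m ℂ →+* Matrix m m ℂ := (starRingEnd ℂ).mapMatrix
  have hΨ : Continuous Ψ := continuous_id.matrix_map Complex.continuous_ofReal
  have hΦ : Continuous Φ := continuous_id.matrix_map Complex.continuous_conj
  have hΦΨ : Φ (Ψ A) = Ψ A := by ext; simp [Ψ, Φ]
  obtain ⟨p, hp⟩ := exists_exp_aeval_eq (Algebra.IsIntegral.isIntegral (Ψ A)) (hA.map Ψ)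
  set C := aeval (Ψ A) p
  replace hp : exp C = Ψ A := hp
  have hΦC : exp (Φ C) = Ψ A := by
    have h : Φ (exp C) = exp (Φ C) := map_exp Φ hΦ C
    rw [← h, hp, hΦΨ]
  have hcomm : Commute C (Φ C) := by
    have h : Commute (Φ C) (Ψ A) := by
      simpa [hΦΨ] using (((Commute.refl (Ψ A)).aeval_right p).map Φ).symm
    exact (h.aeval_right p).symm
  have hre : Ψ (C.map fun z => 2 * z.re) = C + Φ C := by
    ext
    simp [Ψ, Φ, Complex.add_conj]
  refine ⟨C.map fun z => 2 * z.re, Matrix.map_injective Complex.ofReal_injective ?_⟩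
  have h : Ψ (exp (C.map fun z => 2 * z.re)) = exp (Ψ (C.map fun z => 2 * z.re)) :=
    map_exp Ψ hΨ _
  change Ψ (exp _) = Ψ (A * A)
  rw [h, hre, Matrix.exp_add_of_commute _ _ hcomm, hp, hΦC, map_mul]

theorem isOneParamSubgroup_exp_smul {n : ℕ} (L : Matrix (Fin n) (Fin n) ℝ) :
    IsOneParamSubgroup fun t : ℝ => exp (t • L) :=
  ⟨exp_continuous.comp (continuous_id.smul continuous_const), by simp, fun s t => by
    simp only [add_smul,
      Matrix.exp_add_of_commute _ _ (((Commute.refl L).smul_left s).smul_right t)],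
    fun _ => Matrix.isUnit_exp _⟩

end Matrix

theorem IsOneParamSubgroup.apply_half_mul_self {n : ℕ} {ρ : ℝ → Matrix (Fin n) (Fin n) ℝ}
    (hρ : IsOneParamSubgroup ρ) : ρ (1 / 2) * ρ (1 / 2) = ρ 1 := by
  rw [← hρ.2.2.1]
  norm_num

theorem exists_isOneParamSubgroup_apply_one_eq_mul_self {n : ℕ}
    {A : Matrix (Fin n) (Fin n) ℝ} (hA : IsUnit A) :
    ∃ ρ : ℝ → Matrix (Fin n) (Fin n) ℝ, IsOneParamSubgroup ρ ∧ ρ 1 = A * A := by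
  obtain ⟨L, hL⟩ := Matrix.exists_exp_eq_mul_self hA
  exact ⟨_, isOneParamSubgroup_exp_smul L, by simpa using hL⟩

/-- `M ∈ GL(n,ℝ)` lies on a one-parameter subgroup of `GL(n,ℝ)` if and
only if `M` has a square root in `GL(n,ℝ)`; in particular `M²` always lies on a
one-parameter subgroup. -/
theorem lies_on_one_param_iff_square_root {n : ℕ}
    (M : Matrix (Fin n) (Fin n) ℝ) (hM : IsUnit M) :
    ((∃ ρ : ℝ → Matrix (Fin n) (Fin n) ℝ, IsOneParamSubgroup ρ ∧ ρ 1 = M) ↔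
      (∃ A : Matrix (Fin n) (Fin n) ℝ, IsUnit A ∧ A * A = M)) ∧
    (∃ ρ : ℝ → Matrix (Fin n) (Fin n) ℝ, IsOneParamSubgroup ρ ∧ ρ 1 = M * M) :=
  ⟨⟨fun ⟨ρ, hρ, h1⟩ => ⟨ρ (1 / 2), hρ.2.2.2 _, h1 ▸ hρ.apply_half_mul_self⟩,
    fun ⟨_, hA, hAA⟩ => hAA ▸ exists_isOneParamSubgroup_apply_one_eq_mul_self hA⟩,
    exists_isOneParamSubgroup_apply_one_eq_mul_self hM⟩
end

section
/- Let M̄ ∈ GL(n,ℝ) have a single eigenvalue λ > 0, with Jordan filtration V_i = ker((λ·Id − M̄)^{i+1}). If v ∈ V_i \ V_{i−1}, then there exists a constant C_v > 0 such that ‖M̄^t v‖ ≥ C_v·λ^t·t^i for all integers t ≥ 1. -/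
/-!
With `A = -λ⁻¹ (λ - M̄)` we have `M̄ = λ (1 + A)` and `A^(i+1) v = 0`, so the binomial theorem gives
`M̄^t v = λ^t ∑_{k ≤ i} C(t,k) A^k v`. As `C(t,k) = Θ(t^k)` and `A^i v ≠ 0`, the top term dominates
and `λ^t t^i = O(‖M̄^t v‖)`. Invertibility of `M̄` keeps `M̄^t v ≠ 0`, which turns this eventual
bound into one valid for every `t`.
-/

open Finset Filter Asymptotics Matrix

namespace Matrix

variable {m R : Type*} [Fintype m] [DecidableEq m] [CommSemiring R]

theorem pow_mulVec_eq_zero_of_le {A : Matrix m m R} {v : m → R} {i k : ℕ}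
    (hv : (A ^ i) *ᵥ v = 0) (hik : i ≤ k) : (A ^ k) *ᵥ v = 0 := by
  rw [← Nat.sub_add_cancel hik, pow_add, ← mulVec_mulVec, hv, mulVec_zero]

theorem one_add_pow_mulVec_eq_sum_choose {A : Matrix m m R} {v : m → R} {i : ℕ}
    (hv : (A ^ (i + 1)) *ᵥ v = 0) (t : ℕ) :
    ((1 + A) ^ t) *ᵥ v = ∑ k ∈ range (i + 1), (t.choose k : R) • ((A ^ k) *ᵥ v) := by
  have hterm (k : ℕ) : ((A ^ k * 1 ^ (t - k) * (t.choose k : Matrix m m R)) *ᵥ v)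
      = (t.choose k : R) • ((A ^ k) *ᵥ v) := by
    rw [one_pow, mul_one, ← mulVec_mulVec, natCast_mulVec, mulVec_smul]
  rw [add_comm, (Commute.one_right A).add_pow, sum_mulVec]
  simp_rw [hterm]
  calc ∑ k ∈ range (t + 1), (t.choose k : R) • ((A ^ k) *ᵥ v)
      = ∑ k ∈ range (t + i + 1), (t.choose k : R) • ((A ^ k) *ᵥ v) := by
        refine sum_subset (range_subset_range.2 (by omega)) fun k _ hk => ?_
        rw [Nat.choose_eq_zero_of_lt (by simpa using hk), Nat.cast_zero, zero_smul]
    _ = ∑ k ∈ range (i + 1), (t.choose k : R) • ((A ^ k) *ᵥ v) := by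
        refine (sum_subset (range_subset_range.2 (by omega)) fun k _ hk => ?_).symm
        rw [pow_mulVec_eq_zero_of_le hv (by simpa using hk), smul_zero]

end Matrix

theorem Asymptotics.isBigO_natCast_pow_sum_choose_smul {E : Type*} [NormedAddCommGroup E]
    [NormedSpace ℝ E]    {x : ℕ → E} {i : ℕ} (hx : x i ≠ 0) :
    (fun t : ℕ => (t : ℝ) ^ i) =O[atTop]
      fun t : ℕ => ∑ k ∈ range (i + 1), (t.choose k : ℝ) • x k := by
  have hterm (k : ℕ) :
      (fun t : ℕ => (t.choose k : ℝ) • x k) =O[atTop] fun t : ℕ => (t : ℝ) ^ k := by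
    simpa using (isTheta_choose k).isBigO.smul
      (isBigO_const_const (x k) (one_ne_zero (α := ℝ)) (atTop : Filter ℕ))
  have hlead : (fun t : ℕ => (t : ℝ) ^ i) =O[atTop] fun t : ℕ => (t.choose i : ℝ) • x i := by
    simpa using
      ((isTheta_choose i).smul (isTheta_const_const hx (one_ne_zero (α := ℝ)))).symm.isBigO
  have htail : (fun t : ℕ => ∑ k ∈ range i, (t.choose k : ℝ) • x k) =o[atTop]
      fun t : ℕ => (t : ℝ) ^ i :=
    IsLittleO.fun_sum fun k hk => (hterm k).trans_isLittleO <|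
      (isLittleO_pow_pow_atTop_of_lt (mem_range.1 hk)).comp_tendsto tendsto_natCast_atTop_atTop
  simp_rw [sum_range_succ]
  exact hlead.trans (htail.trans_isBigO hlead).right_isBigO_add

theorem exponential_polynomial_lower_bound_general {n : ℕ}
    (Mbar : Matrix (Fin n) (Fin n) ℝ) (hunit : IsUnit Mbar)
    (lam : ℝ) (hlam : 0 < lam)
    (i : ℕ) (v : Fin n → ℝ)
    (hvi : ((lam • (1 : Matrix (Fin n) (Fin n) ℝ) - Mbar) ^ (i + 1)).mulVec v = 0)
    (hvnot : ((lam • (1 : Matrix (Fin n) (Fin n) ℝ) - Mbar) ^ i).mulVec v ≠ 0) :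
    ∃ Cv : ℝ, 0 < Cv ∧ ∀ t : ℕ, 1 ≤ t →
      Cv * lam ^ t * (t : ℝ) ^ i ≤ ‖(Mbar ^ t).mulVec v‖ := by
  set N := lam • (1 : Matrix (Fin n) (Fin n) ℝ) - Mbar
  set A := (-lam⁻¹) • N
  have hM : Mbar = lam • (1 + A) := by
    simp only [A, N, smul_add, smul_smul, mul_neg, mul_inv_cancel₀ hlam.ne', neg_one_smul,
      neg_sub]
    abel
  have hAv (k : ℕ) : (A ^ k) *ᵥ v = (-lam⁻¹) ^ k • ((N ^ k) *ᵥ v) := by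
    rw [smul_pow, smul_mulVec]
  have hexpand (t : ℕ) : (Mbar ^ t) *ᵥ v
      = lam ^ t • ∑ k ∈ range (i + 1), (t.choose k : ℝ) • ((A ^ k) *ᵥ v) := by
    rw [hM, smul_pow, smul_mulVec, one_add_pow_mulVec_eq_sum_choose (by rw [hAv, hvi, smul_zero])]
  have hgrowth : (fun t : ℕ => lam ^ t * (t : ℝ) ^ i) =O[atTop] fun t => (Mbar ^ t) *ᵥ v := by
    simp_rw [hexpand]
    refine (isBigO_refl (fun t : ℕ => lam ^ t) atTop).smul <|
      isBigO_natCast_pow_sum_choose_smul (x := fun k => (A ^ k) *ᵥ v) ?_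
    rw [hAv]
    exact smul_ne_zero (by simp [hlam.ne']) hvnot
  obtain ⟨C, hC, hbound⟩ := bound_of_isBigO_nat_atTop hgrowth
  have hv : v ≠ 0 := by rintro rfl; exact hvnot (mulVec_zero _)
  refine ⟨C⁻¹, inv_pos.2 hC, fun t _ => ?_⟩
  have hMv : (Mbar ^ t) *ᵥ v ≠ 0 :=
    ((mulVec_injective_iff_isUnit.2 (hunit.pow t)).ne_iff' (mulVec_zero _)).2 hv
  have h := hbound hMv
  rw [norm_mul, norm_pow, norm_pow, Real.norm_of_nonneg hlam.le, RCLike.norm_natCast] at h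
  rwa [mul_assoc, inv_mul_le_iff₀ hC]

/-- Exponential·Polynomial Lower Bound.  If `M̄ ∈ GL(n,ℝ)` has single
eigenvalue `λ > 0` (over `ℂ`), with Jordan filtration `V_i = ker((λ·Id − M̄)^{i+1})`
(and `V_{-1} = 0`), and `v ∈ V_i \ V_{i-1}`, then there is `C_v > 0` such that
`‖M̄^t v‖ ≥ C_v·λ^t·t^i` for all integers `t ≥ 1`. -/
theorem exponential_polynomial_lower_bound {n : ℕ}
    (Mbar : Matrix (Fin n) (Fin n) ℝ) (hunit : IsUnit Mbar)
    (lam : ℝ) (hlam : 0 < lam)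
    (hspec : spectrum ℂ (Mbar.map Complex.ofReal) = {(lam : ℂ)})
    (i : ℕ) (v : Fin n → ℝ)
    (hvi : ((lam • (1 : Matrix (Fin n) (Fin n) ℝ) - Mbar) ^ (i + 1)).mulVec v = 0)
    (hvnot : ((lam • (1 : Matrix (Fin n) (Fin n) ℝ) - Mbar) ^ i).mulVec v ≠ 0) :
    ∃ Cv : ℝ, 0 < Cv ∧ ∀ t : ℕ, 1 ≤ t →
      Cv * lam ^ t * (t : ℝ) ^ i ≤ ‖(Mbar ^ t).mulVec v‖ :=
  exponential_polynomial_lower_bound_general Mbar hunit lam hlam i v hvi hvnot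
end

section
/- Let M^t, N^t be one-parameter subgroups of GL(n,ℝ) with no eigenvalues of M = M^1 or N = N^1 on the unit circle, and let f: ℝⁿ → ℝⁿ be a bijection satisfying the uniform quasi-isometry condition (1/K)·d_{M,t}(p,q) − C ≤ d_{N,t}(f(p),f(q)) ≤ K·d_{M,t}(p,q) + C for all t, p, q. Then f is a homeomorphism of ℝⁿ. -/
/-!
Let `A = M¹`, complexified. As no eigenvalue of `A` lies on the unit circle, `ℂⁿ` is the direct sum
of the generalized eigenspaces for eigenvalues inside the unit disc, on which `Aᵐ → 0`, and those
for eigenvalues outside it, on which `A⁻ᵐ → 0`; in finite dimension both limits are uniform. Hence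
for every `R` the set `{y : ‖M^T y‖ ≤ R ∧ ‖M^{-T} y‖ ≤ R}` lies in any given ball around `0` once
`T ∈ ℕ` is large: the sets `F_{p,R}(T)` shrink to `p`, and likewise for `N`. The upper bound of the
quasi-isometry condition maps the neighbourhood `{q : d_{M,±T}(p,q) ≤ 1}` of `p` into the set
`F_{f p, K + C}(T)` built from `N`, so `f` is continuous; the lower bound does the same for `f⁻¹`.
-/

open Filter Topology Module Matrix

theorem tendsto_choose_mul_pow_sub_atTop_nhds_zero (j : ℕ) {r : ℝ} (hr₀ : 0 ≤ r) (hr₁ : r < 1) :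
    Tendsto (fun k : ℕ => (k.choose j : ℝ) * r ^ (k - j)) atTop (𝓝 0) := by
  -- enlarging `r` to some `s ∈ (0, 1)` makes `s ^ (k - j) = s ^ k / s ^ j` available
  set s := (1 + r) / 2 with hs
  have hs₀ : 0 < s := by positivity
  have hs₁ : |s| < 1 := by rw [abs_of_pos hs₀]; linarith
  have hlim : Tendsto (fun k : ℕ => (k : ℝ) ^ j * s ^ k / s ^ j) atTop (𝓝 0) := by
    simpa using (tendsto_pow_const_mul_const_pow_of_abs_lt_one j hs₁).div_const (s ^ j)
  refine squeeze_zero' (.of_forall fun k => by positivity) ?_ hlim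
  filter_upwards [eventually_ge_atTop j] with k hk
  rw [mul_div_assoc, div_eq_mul_inv, ← pow_sub₀ s hs₀.ne' hk]
  gcongr
  · exact_mod_cast Nat.choose_le_pow k j
  · linarith

section FiniteDimensional

variable {𝕜 E F : Type*} [NontriviallyNormedField 𝕜] [CompleteSpace 𝕜]
  [NormedAddCommGroup E] [NormedSpace 𝕜 E] [FiniteDimensional 𝕜 E]
  [NormedAddCommGroup F] [NormedSpace 𝕜 F]

theorem ContinuousLinearMap.tendsto_of_tendsto_apply {α : Type*} {l : Filter α}
    {S : α → E →L[𝕜] F} {T : E →L[𝕜] F} (h : ∀ x, Tendsto (S · x) l (𝓝 (T x))) :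
    Tendsto S l (𝓝 T) := by
  let e : (E →L[𝕜] F) ≃L[𝕜] Fin (finrank 𝕜 E) → F :=
    ((ContinuousLinearEquiv.ofFinrankEq (finrank_fin_fun 𝕜).symm).arrowCongr
      (1 : F ≃L[𝕜] F)).trans (ContinuousLinearEquiv.piRing _)
  rw [e.toHomeomorph.isInducing.tendsto_nhds_iff]
  exact tendsto_pi_nhds.2 fun i => h _

theorem LinearMap.eventually_norm_apply_le_of_tendsto_apply {S : ℕ → E →ₗ[𝕜] F}
    (hS : ∀ x, Tendsto (S · x) atTop (𝓝 0)) {δ : ℝ} (hδ : 0 < δ) :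
    ∀ᶠ k in atTop, ∀ x, ‖S k x‖ ≤ δ * ‖x‖ := by
  have hlim : Tendsto (fun k => LinearMap.toContinuousLinearMap (S k)) atTop (𝓝 0) :=
    ContinuousLinearMap.tendsto_of_tendsto_apply hS
  filter_upwards [hlim.norm.eventually (ge_mem_nhds (by simpa using hδ))] with k hk x
  simpa using ((S k).toContinuousLinearMap.le_opNorm x).trans
    (mul_le_mul_of_nonneg_right hk (norm_nonneg x))

end FiniteDimensional

theorem Submodule.commute_projection_of_mem_invtSubmodule {R M : Type*} [Ring R] [AddCommGroup M]
    [Module R M] {p q : Submodule R M} (hpq : IsCompl p q) {T : Module.End R M}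
    (hp : p ∈ T.invtSubmodule) (hq : q ∈ T.invtSubmodule) : Commute (p.projection q hpq) T :=
  (LinearMap.IsIdempotentElem.commute_iff (Submodule.isIdempotentElem_projection hpq)).2
    ⟨by rwa [Submodule.range_projection], by rwa [Submodule.ker_projection]⟩

namespace Module.End

section CommRing

variable {R M : Type*} [CommRing R] [AddCommGroup M] [Module R M]

theorem pow_apply_eq_sum_of_pow_sub_smul_apply_eq_zero (T : Module.End R M) {μ : R} {d : ℕ}
    {x : M} (hx : ((T - μ • 1) ^ d) x = 0) {k : ℕ} (hk : d ≤ k) :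
    (T ^ k) x = ∑ j ∈ Finset.range d, ((k.choose j : R) * μ ^ (k - j)) • ((T - μ • 1) ^ j) x := by
  set N := T - μ • 1
  have hterm (j : ℕ) : (N ^ j * (μ • 1) ^ (k - j) * (k.choose j : Module.End R M)) x =
      ((k.choose j : R) * μ ^ (k - j)) • (N ^ j) x := by
    simp [smul_pow, mul_smul, Nat.cast_smul_eq_nsmul, smul_comm (μ ^ (k - j))]
  have hvanish (j : ℕ) (hj : d ≤ j) : (N ^ j) x = 0 := by
    rw [← Nat.sub_add_cancel hj, pow_add, Module.End.mul_apply, hx, map_zero]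
  rw [← sub_add_cancel T (μ • 1), (Commute.smul_right (Commute.one_right N) μ).add_pow,
    LinearMap.sum_apply]
  simp only [hterm]
  refine (Finset.sum_subset (Finset.range_subset_range.2 (by omega)) fun j _ hj => ?_).symm
  rw [hvanish j (by simpa using hj), smul_zero]

theorem biSup_maxGenEigenspace_mem_invtSubmodule {L T : Module.End R M} (h : Commute L T)
    (s : Set R) : (⨆ μ ∈ s, L.maxGenEigenspace μ) ∈ T.invtSubmodule :=
  (mem_invtSubmodule T).2 <| iSup₂_le fun μ hμ =>
    fun _ hx => le_biSup L.maxGenEigenspace hμ (mapsTo_maxGenEigenspace_of_comm h μ hx)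

end CommRing

section Field

variable {K V : Type*} [Field K] [AddCommGroup V] [Module K V]

theorem maxGenEigenspace_eq_bot_of_notMem_spectrum [FiniteDimensional K V] {L : Module.End K V}
    {μ : K} (hμ : μ ∉ spectrum K L) : L.maxGenEigenspace μ = ⊥ := by
  by_contra h
  exact hμ (hasEigenvalue_iff_mem_spectrum.1
    ((hasUnifEigenvalue_iff_hasUnifEigenvalue_one (by simp)).1 h))

theorem maxGenEigenspace_le_maxGenEigenspace_inv {L L' : Module.End K V} (h : L * L' = 1)
    (h' : L' * L = 1) {μ : K} (hμ : μ ≠ 0) : L.maxGenEigenspace μ ≤ L'.maxGenEigenspace μ⁻¹ := by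
  intro v hv
  obtain ⟨k, hk⟩ := (L.mem_maxGenEigenspace μ v).1 hv
  refine (L'.mem_maxGenEigenspace μ⁻¹ v).2 ⟨k, ?_⟩
  have hfac : L' - μ⁻¹ • 1 = (-μ⁻¹) • (L' * (L - μ • 1)) := by
    rw [mul_sub, h', mul_smul_comm, mul_one, smul_sub, smul_smul, neg_mul, inv_mul_cancel₀ hμ]
    module
  have hcomm : Commute L' (L - μ • 1) :=
    Commute.sub_right (h'.trans h.symm) ((Commute.one_right L').smul_right μ)
  rw [hfac, smul_pow, hcomm.mul_pow, LinearMap.smul_apply, Module.End.mul_apply, hk, map_zero,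
    smul_zero]

end Field

section Topological

variable {R E : Type*} [Semiring R] [AddCommMonoid E] [Module R E] [TopologicalSpace E]
  [ContinuousAdd E] [ContinuousConstSMul R E]

def stableSubspace (T : Module.End R E) : Submodule R E where
  carrier := {v | Tendsto (fun k : ℕ => (T ^ k) v) atTop (𝓝 0)}
  add_mem' {v w} hv hw := by simpa using hv.add hw
  zero_mem' := by simpa using tendsto_const_nhds
  smul_mem' c v hv := by simpa using hv.const_smul c

end Topological

section Normed

variable {𝕜 E : Type*} [RCLike 𝕜] [NormedAddCommGroup E] [NormedSpace 𝕜 E]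

theorem maxGenEigenspace_le_stableSubspace (T : Module.End 𝕜 E) {μ : 𝕜} (hμ : ‖μ‖ < 1) :
    T.maxGenEigenspace μ ≤ T.stableSubspace := by
  intro x hx
  obtain ⟨d, hd⟩ := (T.mem_maxGenEigenspace μ x).1 hx
  have hcoeff : ∀ j, Tendsto (fun k : ℕ => (k.choose j : 𝕜) * μ ^ (k - j)) atTop (𝓝 0) := by
    intro j
    rw [tendsto_zero_iff_norm_tendsto_zero]
    simpa using tendsto_choose_mul_pow_sub_atTop_nhds_zero j (norm_nonneg μ) hμ
  have hsum := tendsto_finsetSum (Finset.range d) fun j _ =>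
    (hcoeff j).smul_const (((T - μ • 1) ^ j) x)
  simp only [zero_smul, Finset.sum_const_zero] at hsum
  exact hsum.congr' ((eventually_ge_atTop d).mono fun k hk =>
    (T.pow_apply_eq_sum_of_pow_sub_smul_apply_eq_zero hd hk).symm)

end Normed

section Complex

variable {E : Type*} [NormedAddCommGroup E] [NormedSpace ℂ E] [FiniteDimensional ℂ E]

theorem isCompl_biSup_maxGenEigenspace_norm_lt_one {L : Module.End ℂ E}
    (hL : ∀ μ ∈ spectrum ℂ L, ‖μ‖ ≠ 1) :
    IsCompl (⨆ μ ∈ {μ : ℂ | ‖μ‖ < 1}, L.maxGenEigenspace μ)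
      (⨆ μ ∈ {μ : ℂ | 1 < ‖μ‖}, L.maxGenEigenspace μ) := by
  refine ⟨L.independent_maxGenEigenspace.disjoint_biSup_biSup
    (Set.disjoint_left.2 fun μ (h₁ : ‖μ‖ < 1) (h₂ : 1 < ‖μ‖) => lt_asymm h₁ h₂),
    codisjoint_iff.2 (eq_top_iff.2 ?_)⟩
  refine L.iSup_maxGenEigenspace_eq_top.ge.trans (iSup_le fun μ => ?_)
  rcases lt_trichotomy ‖μ‖ 1 with h | h | h
  · exact le_sup_of_le_left (le_biSup L.maxGenEigenspace (s := {μ : ℂ | ‖μ‖ < 1}) h)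
  · rw [maxGenEigenspace_eq_bot_of_notMem_spectrum fun hμ => hL μ hμ h]
    exact bot_le
  · exact le_sup_of_le_right (le_biSup L.maxGenEigenspace (s := {μ : ℂ | 1 < ‖μ‖}) h)

theorem eventually_norm_le_of_norm_pow_apply_le {L L' : Module.End ℂ E} (h : L * L' = 1)
    (h' : L' * L = 1) (hL : ∀ μ ∈ spectrum ℂ L, ‖μ‖ ≠ 1) {ε : ℝ} (hε : 0 < ε) (R : ℝ) :
    ∀ᶠ m in atTop, ∀ y, ‖(L ^ m) y‖ ≤ R → ‖(L' ^ m) y‖ ≤ R → ‖y‖ ≤ ε := by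
  set Es := ⨆ μ ∈ {μ : ℂ | ‖μ‖ < 1}, L.maxGenEigenspace μ
  set Eu := ⨆ μ ∈ {μ : ℂ | 1 < ‖μ‖}, L.maxGenEigenspace μ
  have hc : IsCompl Es Eu := isCompl_biSup_maxGenEigenspace_norm_lt_one hL
  set P := Es.projection Eu hc
  set Q := Eu.projection Es hc.symm
  have hLL' : Commute L L' := h.trans h'.symm
  have hPL : Commute P L := Submodule.commute_projection_of_mem_invtSubmodule hc
    (biSup_maxGenEigenspace_mem_invtSubmodule (.refl L) _)
    (biSup_maxGenEigenspace_mem_invtSubmodule (.refl L) _)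
  have hQL' : Commute Q L' := Submodule.commute_projection_of_mem_invtSubmodule hc.symm
    (biSup_maxGenEigenspace_mem_invtSubmodule hLL' _)
    (biSup_maxGenEigenspace_mem_invtSubmodule hLL' _)
  have hEs : Es ≤ L.stableSubspace :=
    iSup₂_le fun μ hμ => L.maxGenEigenspace_le_stableSubspace hμ
  have hEu : Eu ≤ L'.stableSubspace := iSup₂_le fun μ hμ =>
    have hμ₀ : μ ≠ 0 := by rintro rfl; norm_num at hμ
    (maxGenEigenspace_le_maxGenEigenspace_inv h h' hμ₀).trans
      (L'.maxGenEigenspace_le_stableSubspace (by simpa using inv_lt_one_of_one_lt₀ hμ))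
  set δ := ε / (2 * (|R| + 1))
  have hδ : 0 < δ := by positivity
  filter_upwards [LinearMap.eventually_norm_apply_le_of_tendsto_apply
      (S := fun k => L ^ k * P) (fun x => hEs (Submodule.projection_apply_mem hc x)) hδ,
    LinearMap.eventually_norm_apply_le_of_tendsto_apply
      (S := fun k => L' ^ k * Q) (fun x => hEu (Submodule.projection_apply_mem hc.symm x)) hδ]
    with m hm hm' y h₁ h₂
  have hPy : P y = (L ^ m * P) ((L' ^ m) y) := by
    rw [← (hPL.pow_right m).eq, Module.End.mul_apply, ← Module.End.mul_apply (L ^ m),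
      ← hLL'.mul_pow, h, one_pow, Module.End.one_apply]
  have hQy : Q y = (L' ^ m * Q) ((L ^ m) y) := by
    rw [← (hQL'.pow_right m).eq, Module.End.mul_apply, ← Module.End.mul_apply (L' ^ m),
      ← hLL'.symm.mul_pow, h', one_pow, Module.End.one_apply]
  calc ‖y‖ = ‖P y + Q y‖ := by rw [Submodule.projection_add_projection_eq_self]
    _ ≤ ‖P y‖ + ‖Q y‖ := norm_add_le _ _
    _ ≤ δ * R + δ * R := by
      rw [hPy, hQy]
      exact add_le_add ((hm _).trans (by gcongr)) ((hm' _).trans (by gcongr))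
    _ ≤ δ * (2 * (|R| + 1)) := by nlinarith [le_abs_self R]
    _ = ε := div_mul_cancel₀ _ (by positivity)

end Complex

end Module.End

theorem Complex.norm_ofReal_comp {ι : Type*} [Fintype ι] (y : ι → ℝ) : ‖Complex.ofReal ∘ y‖ = ‖y‖ := by
  simp [Pi.norm_def, Complex.nnnorm_real]

namespace Matrix
variable {n : Type*} [Fintype n] [DecidableEq n]

theorem eventually_norm_le_of_norm_pow_mulVec_le {A B : Matrix n n ℝ} (h : A * B = 1)
    (h' : B * A = 1) (hA : ∀ μ ∈ spectrum ℂ (A.map Complex.ofReal), ‖μ‖ ≠ 1) {ε : ℝ}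
    (hε : 0 < ε) (R : ℝ) :
    ∀ᶠ m in atTop, ∀ y, ‖(A ^ m) *ᵥ y‖ ≤ R → ‖(B ^ m) *ᵥ y‖ ≤ R → ‖y‖ ≤ ε := by
  let Φ : Matrix n n ℝ →+* Module.End ℂ (n → ℂ) :=
    (Matrix.toLinAlgEquiv' : Matrix n n ℂ ≃ₐ[ℂ] _).toRingHom.comp Complex.ofRealHom.mapMatrix
  have hΦ (G : Matrix n n ℝ) (y : n → ℝ) : Φ G (Complex.ofReal ∘ y) = Complex.ofReal ∘ (G *ᵥ y) :=
    funext fun i => (Complex.ofRealHom.map_mulVec G y i).symm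
  have hspec : ∀ μ ∈ spectrum ℂ (Φ A), ‖μ‖ ≠ 1 := by
    rwa [show Φ A = Matrix.toLinAlgEquiv' (A.map Complex.ofReal) from rfl, AlgEquiv.spectrum_eq]
  filter_upwards [Module.End.eventually_norm_le_of_norm_pow_apply_le
    (by rw [← map_mul, h, map_one]) (by rw [← map_mul, h', map_one]) hspec hε R] with m hm y h₁ h₂
  rw [← Complex.norm_ofReal_comp]
  refine hm _ ?_ ?_
  · rwa [← map_pow, hΦ, Complex.norm_ofReal_comp]
  · rwa [← map_pow, hΦ, Complex.norm_ofReal_comp]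

end Matrix

namespace IsOneParamSubgroup
variable {n : ℕ} {ρ : ℝ → Matrix (Fin n) (Fin n) ℝ}

theorem map_natCast_mul (hρ : IsOneParamSubgroup ρ) (m : ℕ) (t : ℝ) : ρ (m * t) = ρ t ^ m := by
  obtain ⟨-, h₀, hadd, -⟩ := hρ
  induction m with
  | zero => simpa using h₀
  | succ m ih => rw [Nat.cast_succ, add_one_mul, hadd, ih, pow_succ]

theorem map_mul_map_neg (hρ : IsOneParamSubgroup ρ) (t : ℝ) : ρ t * ρ (-t) = 1 := by
  obtain ⟨-, h₀, hadd, -⟩ := hρ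
  rw [← hadd, add_neg_cancel, h₀]

theorem exists_norm_le_of_norm_mulVec_le (hρ : IsOneParamSubgroup ρ)
    (hspec : ∀ μ ∈ spectrum ℂ ((ρ 1).map Complex.ofReal), ‖μ‖ ≠ 1) {ε : ℝ} (hε : 0 < ε) (R : ℝ) :
    ∃ T, ∀ y, ‖ρ T *ᵥ y‖ ≤ R → ‖ρ (-T) *ᵥ y‖ ≤ R → ‖y‖ ≤ ε := by
  obtain ⟨m, hm⟩ := (Matrix.eventually_norm_le_of_norm_pow_mulVec_le (hρ.map_mul_map_neg 1)
    (by simpa using hρ.map_mul_map_neg (-1)) hspec hε R).exists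
  refine ⟨m, fun y h₁ h₂ => hm y ?_ ?_⟩
  · simpa [← hρ.map_natCast_mul] using h₁
  · simpa [← hρ.map_natCast_mul] using h₂

end IsOneParamSubgroup

theorem continuous_of_norm_mulVec_sub_le {ι κ : Type*} [Fintype ι] [Fintype κ]
    {ρ : ℝ → Matrix ι ι ℝ} {σ : ℝ → Matrix κ κ ℝ} {g : (ι → ℝ) → κ → ℝ} {K C : ℝ}
    (hσ : ∀ ε > 0, ∀ R, ∃ T, ∀ y, ‖σ T *ᵥ y‖ ≤ R → ‖σ (-T) *ᵥ y‖ ≤ R → ‖y‖ ≤ ε)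
    (hK : 0 ≤ K) (hg : ∀ t p q, ‖σ t *ᵥ (g p - g q)‖ ≤ K * ‖ρ t *ᵥ (p - q)‖ + C) :
    Continuous g := by
  refine continuous_iff_continuousAt.2 fun p =>
    Metric.nhds_basis_closedBall.tendsto_right_iff.2 fun ε hε => ?_
  obtain ⟨T, hT⟩ := hσ ε hε (K + C)
  have hnear (t : ℝ) : ∀ᶠ q in 𝓝 p, ‖σ t *ᵥ (g q - g p)‖ ≤ K + C := by
    have hlim : Tendsto (fun q => ρ t *ᵥ (q - p)) (𝓝 p) (𝓝 0) := by
      simpa using (continuous_const.matrix_mulVec (continuous_sub_right p)).tendsto p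
    filter_upwards [hlim.norm.eventually (ge_mem_nhds (by simp : ‖(0 : ι → ℝ)‖ < 1))] with q hq
    calc ‖σ t *ᵥ (g q - g p)‖ ≤ K * ‖ρ t *ᵥ (q - p)‖ + C := hg t q p
      _ ≤ K * 1 + C := by gcongr
      _ = K + C := by ring
  filter_upwards [hnear T, hnear (-T)] with q h₁ h₂
  rw [Metric.mem_closedBall, dist_eq_norm]
  exact hT _ h₁ h₂

theorem rigidity_map_is_homeomorph_general {n : ℕ}
    (Mt Nt : ℝ → Matrix (Fin n) (Fin n) ℝ)
    (hMt : IsOneParamSubgroup Mt) (hNt : IsOneParamSubgroup Nt)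
    (hMeig : ∀ μ ∈ spectrum ℂ ((Mt 1).map Complex.ofReal), ‖μ‖ ≠ 1)
    (hNeig : ∀ μ ∈ spectrum ℂ ((Nt 1).map Complex.ofReal), ‖μ‖ ≠ 1)
    (f : (Fin n → ℝ) → (Fin n → ℝ)) (hf : Function.Bijective f)
    (K C : ℝ) (hK : 1 ≤ K)
    (hineq : ∀ (t : ℝ) (p q : Fin n → ℝ),
      (1 / K) * ‖(Mt (-t)).mulVec (p - q)‖ - C ≤ ‖(Nt (-t)).mulVec (f p - f q)‖ ∧
      ‖(Nt (-t)).mulVec (f p - f q)‖ ≤ K * ‖(Mt (-t)).mulVec (p - q)‖ + C) :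
    IsHomeomorph f := by
  have hK₀ : 0 < K := zero_lt_one.trans_le hK
  let e := Equiv.ofBijective f hf
  have hf_cont : Continuous f :=
    continuous_of_norm_mulVec_sub_le (fun _ hε => hNt.exists_norm_le_of_norm_mulVec_le hNeig hε)
      hK₀.le fun t p q => by simpa using (hineq (-t) p q).2
  have he_symm_cont : Continuous e.symm := by
    refine continuous_of_norm_mulVec_sub_le (ρ := Nt) (C := K * C)
      (fun _ hε => hMt.exists_norm_le_of_norm_mulVec_le hMeig hε) hK₀.le fun t u v => ?_
    have h := (hineq (-t) (e.symm u) (e.symm v)).1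
    rw [neg_neg, Equiv.ofBijective_apply_symm_apply f hf, Equiv.ofBijective_apply_symm_apply f hf,
      one_div, sub_le_iff_le_add, inv_mul_le_iff₀ hK₀] at h
    linarith
  exact (Homeomorph.mk e hf_cont he_symm_cont).isHomeomorph

/-- With `M^t, N^t` one-parameter subgroups of `GL(n,ℝ)` with no
eigenvalues of `M = M^1` or `N = N^1` on the unit circle, a bijection `f : ℝⁿ → ℝⁿ`
satisfying the uniform quasi-isometry condition between the metrics `d_{M,t}` and
`d_{N,t}` for all `t` is a homeomorphism of `ℝⁿ`. -/
theorem rigidity_map_is_homeomorph {n : ℕ}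
    (Mt Nt : ℝ → Matrix (Fin n) (Fin n) ℝ)
    (hMt : IsOneParamSubgroup Mt) (hNt : IsOneParamSubgroup Nt)
    (hMeig : ∀ μ ∈ spectrum ℂ ((Mt 1).map Complex.ofReal), ‖μ‖ ≠ 1)
    (hNeig : ∀ μ ∈ spectrum ℂ ((Nt 1).map Complex.ofReal), ‖μ‖ ≠ 1)
    (f : (Fin n → ℝ) → (Fin n → ℝ)) (hf : Function.Bijective f)
    (K C : ℝ) (hK : 1 ≤ K) (hC : 0 ≤ C)
    (hineq : ∀ (t : ℝ) (p q : Fin n → ℝ),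
      (1 / K) * ‖(Mt (-t)).mulVec (p - q)‖ - C ≤ ‖(Nt (-t)).mulVec (f p - f q)‖ ∧
      ‖(Nt (-t)).mulVec (f p - f q)‖ ≤ K * ‖(Mt (-t)).mulVec (p - q)‖ + C) :
    IsHomeomorph f :=
  rigidity_map_is_homeomorph_general Mt Nt hMt hNt hMeig hNeig f hf K C hK hineq
end

section
/- Let A be a finitely generated group and φ: A → A an injective endomorphism whose image has finite index. Then φ(V(A)) ⊆ V(A), where V(A) = {g ∈ A : [A : C_A(g)] < ∞} is the virtual center. -/
/-! The image under `φ` of the centralizer of `g` lies in the centralizer of `φ g`, and the image of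
a finite-index subgroup under a homomorphism with finite-index range again has finite index:
`[A : φ H] = [A : H ⊔ ker φ] · [A : φ A]`. -/

namespace Subgroup

variable {G G' : Type*} [Group G] [Group G']

theorem finiteIndex_map (f : G →* G') (H : Subgroup G) [H.FiniteIndex] [f.range.FiniteIndex] :
    (H.map f).FiniteIndex := by
  have : (H ⊔ f.ker).FiniteIndex := finiteIndex_of_le le_sup_left
  constructor
  rw [index_map]
  exact mul_ne_zero FiniteIndex.index_ne_zero FiniteIndex.index_ne_zero

theorem map_centralizer_singleton_le (f : G →* G') (g : G) :
    (centralizer {g}).map f ≤ centralizer {f g} := by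
  simpa only [Set.image_singleton] using map_centralizer_le_centralizer_image {g} f

end Subgroup

theorem virtual_center_endo_invariant_general (A : Type*) [Group A]
    (φ : A →* A) (hfi : φ.range.FiniteIndex) :
    ∀ g : A, (Subgroup.centralizer {g}).FiniteIndex →
      (Subgroup.centralizer {φ g}).FiniteIndex := by
  intro g hg
  have := Subgroup.finiteIndex_map φ (Subgroup.centralizer {g})
  exact Subgroup.finiteIndex_of_le (Subgroup.map_centralizer_singleton_le φ g)

/-- If `A` is a finitely generated group and `φ : A → A` is an injective
endomorphism whose image has finite index, then `φ` maps the virtual center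
`V(A) = {g | [A : C_A(g)] < ∞}` into itself. -/
theorem virtual_center_endo_invariant (A : Type*) [Group A] (hfg : Group.FG A)
    (φ : A →* A) (hinj : Function.Injective φ) (hfi : φ.range.FiniteIndex) :
    ∀ g : A, (Subgroup.centralizer {g}).FiniteIndex →
      (Subgroup.centralizer {φ g}).FiniteIndex :=
  virtual_center_endo_invariant_general A φ hfi
end

section
/- Let V be a finitely generated group whose center Z(V) has finite index in V, and let φ: V → V be an injective endomorphism whose image φ(V) has finite index in V. Then φ(Z(V)) ⊆ Z(V). In fact φ(Z(V)) = Z(φ(V)) = φ(V) ∩ Z(V). -/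
/-!
An injective `φ` maps `Z(V)` isomorphically onto the center `Z(φ V) = φ V ⊓ C(φ V)` of its image,
so `[φ V : Z(φ V)] = [V : Z(V)]`. On the other hand `φ V ⊓ Z(V) ≤ Z(φ V)`, and the index
`[φ V : φ V ⊓ Z(V)]` divides `[V : Z(V)]` because `Z(V)` is normal. Since `[V : Z(V)]` is finite,
the two subgroups have the same index in `φ V`, hence coincide.
-/

namespace Subgroup

variable {G : Type*} [Group G]

theorem eq_of_le_of_relIndex_dvd {C B H : Subgroup G} (hCB : C ≤ B) (hBH : B ≤ H)
    (hB : B.relIndex H ≠ 0) (hdvd : C.relIndex H ∣ B.relIndex H) : C = B := by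
  have htower := relIndex_mul_relIndex C B H hCB hBH
  have heq : C.relIndex H = B.relIndex H := Nat.dvd_antisymm hdvd (relIndex_dvd_of_le_left H hCB)
  have hone : C.relIndex B = 1 := by
    rw [heq] at htower
    exact (Nat.mul_eq_right hB).mp htower
  exact le_antisymm hCB (relIndex_eq_one.mp hone)

theorem inf_center_eq_inf_centralizer_of_relIndex_eq_index {H : Subgroup G}
    [(center G).FiniteIndex] (h : (H ⊓ centralizer H).relIndex H = (center G).index) :
    H ⊓ center G = H ⊓ centralizer H := by
  refine eq_of_le_of_relIndex_dvd (inf_le_inf_left H (center_le_centralizer _)) inf_le_left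
    (h ▸ FiniteIndex.index_ne_zero) ?_
  rw [h, inf_relIndex_left]
  exact relIndex_dvd_index_of_normal _ _

end Subgroup

namespace MonoidHom

variable {G G' : Type*} [Group G] [Group G']

theorem map_center_eq_inf_centralizer_range {φ : G →* G'} (hφ : Function.Injective φ) :
    (Subgroup.center G).map φ = φ.range ⊓ Subgroup.centralizer (φ.range : Set G') := by
  apply le_antisymm
  · rintro _ ⟨z, hz, rfl⟩
    refine ⟨⟨z, rfl⟩, ?_⟩
    rintro _ ⟨v, rfl⟩
    rw [← map_mul, ← map_mul, Subgroup.mem_center_iff.mp hz v]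
  · rintro _ ⟨⟨v, rfl⟩, hv⟩
    refine ⟨v, Subgroup.mem_center_iff.mpr fun w => hφ ?_, rfl⟩
    rw [map_mul, map_mul, hv (φ w) ⟨w, rfl⟩]

theorem relIndex_map_center_range {φ : G →* G'} (hφ : Function.Injective φ) :
    ((Subgroup.center G).map φ).relIndex φ.range = (Subgroup.center G).index := by
  rw [range_eq_map, Subgroup.relIndex_map_map_of_injective _ _ hφ, Subgroup.relIndex_top_right]

end MonoidHom

theorem center_endo_invariant_general (V : Type*) [Group V]
    (hZ : (Subgroup.center V).FiniteIndex)
    (φ : V →* V) (hinj : Function.Injective φ) :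
    (Subgroup.center V).map φ ≤ Subgroup.center V ∧
    (Subgroup.center V).map φ = φ.range ⊓ Subgroup.centralizer (φ.range : Set V) ∧
    (Subgroup.center V).map φ = φ.range ⊓ Subgroup.center V := by
  have hmap := φ.map_center_eq_inf_centralizer_range hinj
  have hcap : φ.range ⊓ Subgroup.center V = (Subgroup.center V).map φ := by
    rw [hmap]
    exact Subgroup.inf_center_eq_inf_centralizer_of_relIndex_eq_index
      (hmap ▸ φ.relIndex_map_center_range hinj)
  exact ⟨hcap ▸ inf_le_right, hmap, hcap.symm⟩

/-- If `V` is a finitely generated group whose center has finite index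
and `φ : V → V` is an injective endomorphism with finite-index image, then
`φ(Z(V)) ⊆ Z(V)`; in fact `φ(Z(V)) = Z(φ(V)) = φ(V) ∩ Z(V)`. -/
theorem center_endo_invariant (V : Type*) [Group V] (hfg : Group.FG V)
    (hZ : (Subgroup.center V).FiniteIndex)
    (φ : V →* V) (hinj : Function.Injective φ) (hfi : φ.range.FiniteIndex) :
    (Subgroup.center V).map φ ≤ Subgroup.center V ∧
    (Subgroup.center V).map φ = φ.range ⊓ Subgroup.centralizer (φ.range : Set V) ∧
    (Subgroup.center V).map φ = φ.range ⊓ Subgroup.center V :=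
  center_endo_invariant_general V hZ φ hinj
end

section
/- Let A be a finitely generated virtually abelian group. Then the torsion subgroup of the center of the virtual center of A, T(Z(V(A))), is a finite subgroup that is invariant under every injective endomorphism of A; moreover every injective endomorphism of A maps T(Z(V(A))) onto itself. -/
/-- The virtual center of `A`: elements with finite-index centralizer. -/
def virtCenterSet (A : Type*) [Group A] : Set A :=
  {g : A | (Subgroup.centralizer {g}).FiniteIndex}

/-- The center of the virtual center of `A` (as a set). -/
def centerVirtCenterSet (A : Type*) [Group A] : Set A :=
  {g : A | g ∈ virtCenterSet A ∧ ∀ h ∈ virtCenterSet A, g * h = h * g}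

/-- The torsion part `T(Z(V(A)))` of the center of the virtual center of `A`. -/
def torsionCenterVirtCenterSet (A : Type*) [Group A] : Set A :=
  {g : A | g ∈ centerVirtCenterSet A ∧ ∃ k : ℕ, 0 < k ∧ g ^ k = 1}

/-!
Let `B ≤ A` be abelian of finite index. The virtual center `V` contains `B`, so it has finite
index and is finitely generated; its center `Z` is then the intersection of finitely many
finite-index centralizers, so `Z` is a finitely generated abelian group of finite index, with
finite torsion. Since `Z` is central in `V`, two torsion elements of `V` in the same coset of `Z`
differ by a torsion element of `Z`; hence the set `W` of torsion elements of `V` is finite.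

An injective `φ : A →* A` maps `B ∩ φ⁻¹ B` injectively into `B`, and both have the same
`ℤ`-rank, so `φ(A)` has finite index. Consequently `φ` maps `V` into `V`, hence `W` into `W`,
bijectively because `W` is finite. Moreover `φ g ∈ T(Z(V))` forces `g ∈ T(Z(V))`, so
`T(Z(V)) ⊆ φ(T(Z(V)))`, and equality follows by counting.
-/

open Module Subgroup

theorem Module.finite_iff_finrank_int_eq_zero (Q : Type*) [AddCommGroup Q]
    [Module.Finite ℤ Q] : Finite Q ↔ finrank ℤ Q = 0 := by
  rw [Module.finrank_eq_zero_iff]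
  refine ⟨fun _ x => ⟨Nat.card Q, by exact_mod_cast Nat.card_pos.ne', ?_⟩, fun h => ?_⟩
  · rw [natCast_zsmul]
    exact card_nsmul_eq_zero'
  · refine Module.finite_of_fg_torsion Q fun x => ?_
    obtain ⟨a, ha, hax⟩ := h x
    exact ⟨⟨a, mem_nonZeroDivisors_of_ne_zero ha⟩, hax⟩

theorem Submodule.finite_quotient_iff_finrank_eq {M : Type*} [AddCommGroup M]
    [Module.Finite ℤ M] (N : Submodule ℤ M) : Finite (M ⧸ N) ↔ finrank ℤ N = finrank ℤ M := by
  rw [Module.finite_iff_finrank_int_eq_zero, ← N.finrank_quotient_add_finrank]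
  omega

theorem AddSubgroup.finiteIndex_range_of_injective {M : Type*} [AddCommGroup M] [AddGroup.FG M]
    {N : AddSubgroup M} [N.FiniteIndex] {f : N →+ M} (hf : Function.Injective f) :
    f.range.FiniteIndex := by
  have : Module.Finite ℤ M := Module.Finite.iff_addGroup_fg.mpr ‹_›
  have hN : finrank ℤ N.toIntSubmodule = finrank ℤ M :=
    N.toIntSubmodule.finite_quotient_iff_finrank_eq.mp N.finite_quotient_of_finiteIndex
  set g : N.toIntSubmodule →ₗ[ℤ] M := f.toIntLinearMap
  have hg : finrank ℤ (LinearMap.range g) = finrank ℤ M :=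
    (LinearEquiv.ofInjective g hf).finrank_eq.symm.trans hN
  have : Finite (M ⧸ (LinearMap.range g).toAddSubgroup) :=
    (Submodule.finite_quotient_iff_finrank_eq _).mpr hg
  rw [LinearMap.range_toAddSubgroup] at this
  exact AddSubgroup.finiteIndex_of_finite_quotient (H := g.toAddMonoidHom.range)

theorem Subgroup.finiteIndex_range_of_injective {G : Type*} [CommGroup G] [Group.FG G]
    {H : Subgroup G} [H.FiniteIndex] {f : H →* G} (hf : Function.Injective f) :
    f.range.FiniteIndex := by
  have : H.toAddSubgroup.FiniteIndex := finiteIndex_toAddSubgroup_iff.mpr ‹_›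
  rw [← finiteIndex_toAddSubgroup_iff, ← MonoidHom.coe_toAdditive_range]
  exact AddSubgroup.finiteIndex_range_of_injective (N := H.toAddSubgroup)
    (f := MonoidHom.toAdditive f) hf

theorem CommGroup.finite_setOf_isOfFinOrder (G : Type*) [CommGroup G] [Group.FG G] :
    {g : G | IsOfFinOrder g}.Finite := by
  have : Module.Finite ℤ (Additive G) := Module.Finite.iff_addGroup_fg.mpr inferInstance
  have : Finite (Submodule.torsion ℤ (Additive G)) :=
    Module.finite_of_fg_torsion _ Submodule.torsion_isTorsion
  change (AddCommGroup.torsion (Additive G) : Set (Additive G)).Finite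
  rw [← Submodule.torsion_int, Submodule.coe_toAddSubgroup]
  exact Set.toFinite _

namespace Subgroup

variable {G G' : Type*} [Group G] [Group G']

theorem finiteIndex_comap (H : Subgroup G) [H.FiniteIndex] (f : G' →* G) :
    (H.comap f).FiniteIndex :=
  ⟨by rw [index_comap]; exact (instFiniteIndex_subgroupOf H f.range).index_ne_zero⟩

theorem finiteIndex_map_of_injective (H : Subgroup G) [H.FiniteIndex] {f : G →* G'}
    [f.range.FiniteIndex] (hf : Function.Injective f) : (H.map f).FiniteIndex :=
  ⟨by
    rw [index_map_of_injective H hf]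
    exact mul_ne_zero FiniteIndex.index_ne_zero FiniteIndex.index_ne_zero⟩

theorem centralizer_singleton_inf_le_centralizer_mul (g h : G) :
    centralizer {g} ⊓ centralizer {h} ≤ centralizer {g * h} := by
  rintro x ⟨hg, hh⟩
  exact mem_centralizer_singleton_iff.mpr
    ((show Commute x g from mem_centralizer_singleton_iff.mp hg).mul_right
      (mem_centralizer_singleton_iff.mp hh))

theorem finiteIndex_centralizer_of_fg {H : Subgroup G} (hH : H.FG)
    (h : ∀ g ∈ H, (centralizer {g}).FiniteIndex) : (centralizer (H : Set G)).FiniteIndex := by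
  obtain ⟨S, rfl⟩ := hH
  rw [centralizer_closure, centralizer_eq_iInf]
  exact finiteIndex_iInf' _ fun g hg => h g (subset_closure hg)

theorem finite_setOf_isOfFinOrder_of_le_centralizer {H Z : Subgroup G} [Z.FiniteIndex]
    (hHZ : H ≤ centralizer Z) (hZ : {z | z ∈ Z ∧ IsOfFinOrder z}.Finite) :
    {g | g ∈ H ∧ IsOfFinOrder g}.Finite := by
  have : Finite (G ⧸ Z) := finite_quotient_of_finiteIndex
  set W := {g | g ∈ H ∧ IsOfFinOrder g}
  have hfiber (t : G) (ht : t ∈ W) : {w ∈ W | (w : G ⧸ Z) = t}.Finite := by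
    refine (hZ.image (t * ·)).subset ?_
    rintro w ⟨⟨-, hw⟩, hwt⟩
    have hz : t⁻¹ * w ∈ Z := QuotientGroup.eq.mp hwt.symm
    have htz : Commute t (t⁻¹ * w) := (mem_centralizer_iff.mp (hHZ ht.1) _ hz).symm
    have htw : Commute t⁻¹ w := by simpa using ((Commute.refl t).mul_right htz).inv_left
    exact ⟨t⁻¹ * w, ⟨hz, htw.isOfFinOrder_mul ht.2.inv hw⟩, mul_inv_cancel_left t w⟩
  refine (Set.finite_iUnion (f := fun q : G ⧸ Z => {w ∈ W | (w : G ⧸ Z) = q})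
    fun q => ?_).subset fun g hg => Set.mem_iUnion.mpr ⟨g, hg, rfl⟩
  rcases Set.eq_empty_or_nonempty {w ∈ W | (w : G ⧸ Z) = q} with h | ⟨t, ht, rfl⟩
  · exact h ▸ Set.finite_empty
  · exact hfiber t ht

end Subgroup

open IsMulCommutative in
theorem MonoidHom.finiteIndex_range_of_injective {G : Type*} [Group G] [Group.FG G]
    (B : Subgroup G) [B.FiniteIndex] [IsMulCommutative B] {φ : G →* G}
    (hφ : Function.Injective φ) : φ.range.FiniteIndex := by
  have : Group.FG B := fg_of_index_ne_zero B
  have := B.finiteIndex_comap φ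
  let f : (B.comap φ).subgroupOf B →* B :=
    (φ.comp (B.subtype.comp ((B.comap φ).subgroupOf B).subtype)).codRestrict B fun x => x.2
  have hf : Function.Injective f := fun x y h =>
    Subtype.ext <| Subtype.ext <| hφ <| congrArg Subtype.val h
  have := Subgroup.finiteIndex_range_of_injective hf
  have : (f.range.map B.subtype).FiniteIndex :=
    ⟨by
      rw [index_map_subtype]
      exact mul_ne_zero FiniteIndex.index_ne_zero FiniteIndex.index_ne_zero⟩
  refine finiteIndex_of_le (H := f.range.map B.subtype) ?_
  rintro _ ⟨_, ⟨x, rfl⟩, rfl⟩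
  exact ⟨x, rfl⟩

section VirtualCenter

variable {A A' : Type*} [Group A] [Group A']

def virtCenter (A : Type*) [Group A] : Subgroup A where
  carrier := virtCenterSet A
  one_mem' := finiteIndex_of_le (H := ⊤) fun x _ => mem_centralizer_singleton_iff.mpr (by simp)
  mul_mem' {g h} (hg : (centralizer {g}).FiniteIndex) (hh : (centralizer {h}).FiniteIndex) :=
    finiteIndex_of_le (centralizer_singleton_inf_le_centralizer_mul g h)
  inv_mem' {g} (hg : (centralizer {g}).FiniteIndex) :=
    finiteIndex_of_le (H := centralizer {g}) fun x hx => mem_centralizer_singleton_iff.mpr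
      (show Commute x g from mem_centralizer_singleton_iff.mp hx).inv_right

theorem le_virtCenter (B : Subgroup A) [B.FiniteIndex] [IsMulCommutative B] :
    B ≤ virtCenter A :=
  fun _ hb => finiteIndex_of_le (H := B) fun _ hx =>
    mem_centralizer_singleton_iff.mpr (setLike_mul_comm hx hb)

def centerVirtCenter (A : Type*) [Group A] : Subgroup A :=
  virtCenter A ⊓ centralizer (virtCenter A)

instance : IsMulCommutative (centerVirtCenter A) :=
  le_centralizer_iff_isMulCommutative.mp (inf_le_right.trans (centralizer_le inf_le_left))

theorem finiteIndex_centerVirtCenter [Group.FG A] [(virtCenter A).FiniteIndex] :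
    (centerVirtCenter A).FiniteIndex :=
  have : Group.FG (virtCenter A) := fg_of_index_ne_zero _
  have := finiteIndex_centralizer_of_fg ((Group.fg_iff_subgroup_fg _).mp this) fun _ hg => hg
  inferInstanceAs (virtCenter A ⊓ _).FiniteIndex

open IsMulCommutative in
theorem finite_setOf_mem_virtCenter_isOfFinOrder [Group.FG A] [(virtCenter A).FiniteIndex] :
    {g | g ∈ virtCenter A ∧ IsOfFinOrder g}.Finite := by
  have := finiteIndex_centerVirtCenter (A := A)
  have : Group.FG (centerVirtCenter A) := fg_of_index_ne_zero _
  refine finite_setOf_isOfFinOrder_of_le_centralizer (Z := centerVirtCenter A)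
    (le_centralizer_iff.mp inf_le_right) ?_
  refine ((CommGroup.finite_setOf_isOfFinOrder (centerVirtCenter A)).image Subtype.val).subset ?_
  rintro z ⟨hz, hfin⟩
  exact ⟨⟨z, hz⟩, Submonoid.isOfFinOrder_coe.mp hfin, rfl⟩

theorem map_mem_virtCenter {φ : A →* A'} (hφ : Function.Injective φ) [φ.range.FiniteIndex]
    {g : A} (hg : g ∈ virtCenter A) : φ g ∈ virtCenter A' := by
  have : (centralizer {g}).FiniteIndex := hg
  have := (centralizer {g}).finiteIndex_map_of_injective hφ
  have := map_centralizer_le_centralizer_image {g} φ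
  rw [Set.image_singleton] at this
  exact finiteIndex_of_le this

theorem mem_torsionCenterVirtCenterSet_of_map_mem {φ : A →* A'} (hφ : Function.Injective φ)
    (hV : ∀ g ∈ virtCenter A, φ g ∈ virtCenter A') {g : A}
    (hg : φ g ∈ torsionCenterVirtCenterSet A') : g ∈ torsionCenterVirtCenterSet A := by
  obtain ⟨⟨hgV, hgZ⟩, k, hk, hgk⟩ := hg
  refine ⟨⟨?_, fun h hh => hφ ?_⟩, k, hk, (map_eq_one_iff φ hφ).mp (by rw [map_pow, hgk])⟩
  · have : (centralizer {φ g}).FiniteIndex := hgV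
    have := (centralizer {φ g}).finiteIndex_comap φ
    refine finiteIndex_of_le (H := (centralizer {φ g}).comap φ) fun x hx => ?_
    rw [mem_comap, mem_centralizer_singleton_iff, ← map_mul, ← map_mul] at hx
    exact mem_centralizer_singleton_iff.mpr (hφ hx)
  · rw [map_mul, map_mul, hgZ (φ h) (hV h hh)]

end VirtualCenter

/-- For a finitely generated virtually abelian group `A`, the torsion
subgroup `T(Z(V(A)))` of the center of the virtual center is finite, and every
injective endomorphism of `A` maps it onto itself. -/
theorem torsion_center_virtual_center_finite_invariant (A : Type*) [Group A]
    (hfg : Group.FG A)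
    (hva : ∃ B : Subgroup A, B.FiniteIndex ∧ ∀ x ∈ B, ∀ y ∈ B, x * y = y * x) :
    (torsionCenterVirtCenterSet A).Finite ∧
    ∀ φ : A →* A, Function.Injective φ →
      φ '' torsionCenterVirtCenterSet A = torsionCenterVirtCenterSet A := by
  obtain ⟨B, hB, hBcomm⟩ := hva
  have : IsMulCommutative B := ⟨⟨fun x y => Subtype.ext (hBcomm x x.2 y y.2)⟩⟩
  have : (virtCenter A).FiniteIndex := finiteIndex_of_le (le_virtCenter B)
  set T := torsionCenterVirtCenterSet A
  set W := {g | g ∈ virtCenter A ∧ IsOfFinOrder g}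
  have hW : W.Finite := finite_setOf_mem_virtCenter_isOfFinOrder
  have hTW : T ⊆ W := fun g ⟨hg, k, hk, hgk⟩ =>
    ⟨hg.1, isOfFinOrder_iff_pow_eq_one.mpr ⟨k, hk, hgk⟩⟩
  refine ⟨hW.subset hTW, fun φ hφ => ?_⟩
  have := MonoidHom.finiteIndex_range_of_injective B hφ
  have hφV (g : A) (hg : g ∈ virtCenter A) : φ g ∈ virtCenter A :=
    map_mem_virtCenter hφ hg
  have hφW : φ '' W = W :=
    ((hW.injOn_iff_bijOn_of_mapsTo fun g hg => ⟨hφV g hg.1, φ.isOfFinOrder hg.2⟩).mp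
      hφ.injOn).image_eq
  have hTφT : T ⊆ φ '' T := fun t ht => by
    obtain ⟨w, -, rfl⟩ := hφW.symm ▸ hTW ht
    exact ⟨w, mem_torsionCenterVirtCenterSet_of_map_mem hφ hφV ht, rfl⟩
  exact (Set.eq_of_subset_of_ncard_le hTφT (Set.ncard_image_of_injective T hφ).le
    ((hW.subset hTW).image φ)).symm
end
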